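/- arXiv:2502.10035 — 8 statements merged into one kernel-verified Lean document; each statement's English description precedes it below -/
import Mathlib

section
/- Suppose problem (P) admits two solutions z₁, z₂ for the same c, with z₁(u) < z₂(u) for all u ∈ (0,1). Then a contradiction follows; hence any two solutions of (P) for the same c coincide provided they never intersect in (0,1). In particular, combined with uniqueness of the ODE through a point, problem (P) has at most one solution for each c ∈ ℝ. -/
/-!
Subtracting the two equations, `w = z₂ - z₁` has derivative `h / z₁ ^ α - h / z₂ ^ α`,
which is positive because `z₁ < z₂` and `h > 0`. So `w` is strictly increasing on `(0,1)`;
but `w > 0` there while `w(1⁻) = 0`.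
-/

open Set Filter Topology Real

lemma div_rpow_lt_div_rpow {a x y α : ℝ} (ha : 0 < a) (hx : 0 < x) (hxy : x < y) (hα : 0 < α) :
    a / y ^ α < a / x ^ α :=
  div_lt_div_of_pos_left ha (rpow_pos_of_pos hx α) (rpow_lt_rpow hx.le hxy hα)

lemma strictMonoOn_sub_of_hasDerivAt_sub_div_rpow {s : Set ℝ} (hs : Convex ℝ s)
    (hs_open : IsOpen s) {α : ℝ} (hα : 0 < α) (F : ℝ → ℝ) {h z₁ z₂ : ℝ → ℝ}
    (hhpos : ∀ u ∈ s, 0 < h u)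
    (hz₁ : ∀ u ∈ s, HasDerivAt z₁ (F u - h u / z₁ u ^ α) u)
    (hz₂ : ∀ u ∈ s, HasDerivAt z₂ (F u - h u / z₂ u ^ α) u)
    (hz₁pos : ∀ u ∈ s, 0 < z₁ u) (hlt : ∀ u ∈ s, z₁ u < z₂ u) :
    StrictMonoOn (z₂ - z₁) s := by
  have hderiv : ∀ u ∈ s, HasDerivAt (z₂ - z₁) (h u / z₁ u ^ α - h u / z₂ u ^ α) u :=
    fun u hu ↦ ((hz₂ u hu).sub (hz₁ u hu)).congr_deriv (by ring)
  have hcont : ContinuousOn (z₂ - z₁) s :=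
    fun u hu ↦ (hderiv u hu).continuousAt.continuousWithinAt
  refine strictMonoOn_of_deriv_pos hs hcont fun u hu ↦ ?_
  rw [hs_open.interior_eq] at hu
  rw [(hderiv u hu).deriv]
  exact sub_pos.2 (div_rpow_lt_div_rpow (hhpos u hu) (hz₁pos u hu) (hlt u hu) hα)

lemma StrictMonoOn.lt_of_tendsto_nhdsLT {a b l x : ℝ} {w : ℝ → ℝ}
    (hw : StrictMonoOn w (Ioo a b)) (hlim : Tendsto w (𝓝[<] b) (𝓝 l)) (hx : x ∈ Ioo a b) :
    w x < l := by
  obtain ⟨y, hxy, hyb⟩ := exists_between hx.2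
  have hy : y ∈ Ioo a b := ⟨hx.1.trans hxy, hyb⟩
  calc w x < w y := hw hx hy hxy
    _ ≤ l := ge_of_tendsto hlim <| by
      filter_upwards [Ioo_mem_nhdsLT hyb] with v hv
      exact (hw hy ⟨hy.1.trans hv.1, hv.2⟩ hv.1).le

theorem stmt_3_general (α c : ℝ) (hα : 0 < α) (f g h : ℝ → ℝ)
    (hhpos : ∀ u ∈ Ioo (0:ℝ) 1, 0 < h u)
    (z₁ z₂ : ℝ → ℝ)
    (hz₁ : ∀ u ∈ Ioo (0:ℝ) 1, HasDerivAt z₁ (c * g u - f u - h u / z₁ u ^ α) u)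
    (hz₁pos : ∀ u ∈ Ioo (0:ℝ) 1, 0 < z₁ u)
    (hz₁1 : Tendsto z₁ (𝓝[<] (1:ℝ)) (𝓝 0))
    (hz₂ : ∀ u ∈ Ioo (0:ℝ) 1, HasDerivAt z₂ (c * g u - f u - h u / z₂ u ^ α) u)
    (hz₂1 : Tendsto z₂ (𝓝[<] (1:ℝ)) (𝓝 0))
    (hlt : ∀ u ∈ Ioo (0:ℝ) 1, z₁ u < z₂ u) :
    False := by
  have hmono : StrictMonoOn (z₂ - z₁) (Ioo 0 1) :=
    strictMonoOn_sub_of_hasDerivAt_sub_div_rpow (convex_Ioo 0 1) isOpen_Ioo hα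
      (fun u ↦ c * g u - f u) hhpos hz₁ hz₂ hz₁pos hlt
  have hgap_lim : Tendsto (z₂ - z₁) (𝓝[<] (1:ℝ)) (𝓝 0) := by
    have := hz₂1.sub hz₁1
    rwa [sub_zero] at this
  have hhalf : (1 / 2 : ℝ) ∈ Ioo (0:ℝ) 1 := by norm_num
  have hgap_neg := hmono.lt_of_tendsto_nhdsLT hgap_lim hhalf
  exact (sub_pos.2 (hlt _ hhalf)).not_gt hgap_neg

/-- Two solutions of the doubly singular problem (P) for the same speed `c`
cannot satisfy `z₁ < z₂` everywhere on `(0,1)`; in particular (P) has at most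
one solution among pairs that never intersect. -/
theorem stmt_3 (α c : ℝ) (hα : 0 < α) (f g h : ℝ → ℝ)
    (hf : ContinuousOn f (Icc 0 1)) (hg : ContinuousOn g (Icc 0 1))
    (hh : ContinuousOn h (Icc 0 1))
    (hh0 : h 0 = 0) (hh1 : h 1 = 0) (hhpos : ∀ u ∈ Ioo (0:ℝ) 1, 0 < h u)
    (z₁ z₂ : ℝ → ℝ)
    (hz₁ : ∀ u ∈ Ioo (0:ℝ) 1, HasDerivAt z₁ (c * g u - f u - h u / z₁ u ^ α) u)
    (hz₁pos : ∀ u ∈ Ioo (0:ℝ) 1, 0 < z₁ u)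
    (hz₁0 : Tendsto z₁ (𝓝[>] (0:ℝ)) (𝓝 0)) (hz₁1 : Tendsto z₁ (𝓝[<] (1:ℝ)) (𝓝 0))
    (hz₂ : ∀ u ∈ Ioo (0:ℝ) 1, HasDerivAt z₂ (c * g u - f u - h u / z₂ u ^ α) u)
    (hz₂pos : ∀ u ∈ Ioo (0:ℝ) 1, 0 < z₂ u)
    (hz₂0 : Tendsto z₂ (𝓝[>] (0:ℝ)) (𝓝 0)) (hz₂1 : Tendsto z₂ (𝓝[<] (1:ℝ)) (𝓝 0))
    (hlt : ∀ u ∈ Ioo (0:ℝ) 1, z₁ u < z₂ u) :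
    False :=
  stmt_3_general α c hα f g h hhpos z₁ z₂ hz₁ hz₁pos hz₁1 hz₂ hz₂1 hlt
end

section
/- Let z ∈ C¹(a,b) be a positive solution of ż = c g(u) − f(u) − h(u)/z^α on a maximal existence interval (a,b) ⊆ (0,1). Then the limits of z at a⁺ and at b⁻ exist and are finite. -/
/-!
Since `h > 0` on `(0,1)`, the derivative of `z` is bounded above by a bound `M` for `c g − f`,
so `z u − M u` is antitone and has one-sided limits in `[-∞, +∞]` at both ends. Positivity of
`z` excludes `-∞` at `b⁻`. At `a⁺`, wherever `z ≥ 1` the singular term `h/z^α` is bounded by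
`max h`, so the derivative is bounded below there as well; once `z` is large at some point it
stays `≥ 1` to the left of it, and so cannot escape to `+∞`.
-/

open Set Filter Topology Real

section DerivBounds

variable {z z' : ℝ → ℝ} {D : Set ℝ} {C : ℝ}

theorem Convex.sub_le_mul_sub_of_hasDerivAt_le (hD : Convex ℝ D)
    (hz : ∀ u ∈ D, HasDerivAt z (z' u) u) (hle : ∀ u ∈ D, z' u ≤ C)
    {u v : ℝ} (hu : u ∈ D) (hv : v ∈ D) (huv : u ≤ v) : z v - z u ≤ C * (v - u) :=
  hD.image_sub_le_mul_sub_of_deriv_le (fun x hx => (hz x hx).continuousAt.continuousWithinAt)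
    (fun x hx => (hz x (interior_subset hx)).differentiableAt.differentiableWithinAt)
    (fun x hx => (hz x (interior_subset hx)).deriv ▸ hle x (interior_subset hx)) u hu v hv huv

theorem Convex.mul_sub_le_sub_of_le_hasDerivAt (hD : Convex ℝ D)
    (hz : ∀ u ∈ D, HasDerivAt z (z' u) u) (hge : ∀ u ∈ D, C ≤ z' u)
    {u v : ℝ} (hu : u ∈ D) (hv : v ∈ D) (huv : u ≤ v) : C * (v - u) ≤ z v - z u :=
  hD.mul_sub_le_image_sub_of_le_deriv (fun x hx => (hz x hx).continuousAt.continuousWithinAt)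
    (fun x hx => (hz x (interior_subset hx)).differentiableAt.differentiableWithinAt)
    (fun x hx => (hz x (interior_subset hx)).deriv ▸ hge x (interior_subset hx)) u hu v hv huv

theorem Convex.antitoneOn_sub_mul_of_hasDerivAt_le (hD : Convex ℝ D)
    (hz : ∀ u ∈ D, HasDerivAt z (z' u) u) (hle : ∀ u ∈ D, z' u ≤ C) :
    AntitoneOn (fun u => z u - C * u) D := fun u hu v hv huv => by
  linarith [hD.sub_le_mul_sub_of_hasDerivAt_le hz hle hu hv huv]

end DerivBounds

section Limits

variable {z z' : ℝ → ℝ} {a b C : ℝ}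

theorem mul_sub_le_abs_mul_sub {u v : ℝ} (hu : a < u) (huv : u ≤ v) (hv : v < b) :
    C * (v - u) ≤ |C| * (b - a) :=
  calc C * (v - u) ≤ |C| * (v - u) := mul_le_mul_of_nonneg_right (le_abs_self C) (sub_nonneg.2 huv)
    _ ≤ |C| * (b - a) := mul_le_mul_of_nonneg_left (by linarith) (abs_nonneg C)

theorem abs_mul_le_of_mem_Ioo {u : ℝ} (hu : u ∈ Ioo a b) : |C * u| ≤ |C| * max |a| |b| := by
  rw [abs_mul]
  exact mul_le_mul_of_nonneg_left (abs_le_max_abs_abs hu.1.le hu.2.le) (abs_nonneg C)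

theorem exists_tendsto_nhdsGT_of_hasDerivAt_le (hab : a < b)
    (hz : ∀ u ∈ Ioo a b, HasDerivAt z (z' u) u) (hle : ∀ u ∈ Ioo a b, z' u ≤ C)
    (hbdd : BddAbove (z '' Ioo a b)) : ∃ l, Tendsto z (𝓝[>] a) (𝓝 l) := by
  obtain ⟨B, hB⟩ := hbdd
  have hψ : BddAbove ((fun u => z u - C * u) '' Ioo a b) := by
    refine ⟨B + |C| * max |a| |b|, ?_⟩
    rintro _ ⟨u, hu, rfl⟩
    linarith [hB (mem_image_of_mem z hu), neg_abs_le (C * u), abs_mul_le_of_mem_Ioo (C := C) hu]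
  have hlim := ((convex_Ioo a b).antitoneOn_sub_mul_of_hasDerivAt_le hz hle
    |>.tendsto_nhdsWithin_Ioo_right (nonempty_Ioo.2 hab) hψ).add
    ((continuous_const_mul C).tendsto a |>.mono_left nhdsWithin_le_nhds)
  exact ⟨_, hlim.congr fun u => sub_add_cancel _ _⟩

theorem exists_tendsto_nhdsLT_of_hasDerivAt_le (hab : a < b)
    (hz : ∀ u ∈ Ioo a b, HasDerivAt z (z' u) u) (hle : ∀ u ∈ Ioo a b, z' u ≤ C)
    (hbdd : BddBelow (z '' Ioo a b)) : ∃ l, Tendsto z (𝓝[<] b) (𝓝 l) := by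
  obtain ⟨B, hB⟩ := hbdd
  have hψ : BddBelow ((fun u => z u - C * u) '' Ioo a b) := by
    refine ⟨B - |C| * max |a| |b|, ?_⟩
    rintro _ ⟨u, hu, rfl⟩
    linarith [hB (mem_image_of_mem z hu), le_abs_self (C * u), abs_mul_le_of_mem_Ioo (C := C) hu]
  have hlim := ((convex_Ioo a b).antitoneOn_sub_mul_of_hasDerivAt_le hz hle
    |>.tendsto_nhdsWithin_Ioo_left (nonempty_Ioo.2 hab) hψ).add
    ((continuous_const_mul C).tendsto b |>.mono_left nhdsWithin_le_nhds)
  exact ⟨_, hlim.congr fun u => sub_add_cancel _ _⟩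

theorem bddAbove_image_Ioo_of_hasDerivAt_bounds {M K R : ℝ}
    (hz : ∀ u ∈ Ioo a b, HasDerivAt z (z' u) u) (hle : ∀ u ∈ Ioo a b, z' u ≤ M)
    (hge : ∀ u ∈ Ioo a b, R ≤ z u → -K ≤ z' u) : BddAbove (z '' Ioo a b) := by
  have growth : ∀ u ∈ Ioo a b, ∀ v ∈ Ioo a b, u ≤ v → z v ≤ z u + |M| * (b - a) := by
    intro u hu v hv huv
    have := (convex_Ioo a b).sub_le_mul_sub_of_hasDerivAt_le hz hle hu hv huv
    linarith [mul_sub_le_abs_mul_sub (C := M) hu.1 huv hv.2]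
  by_cases hlarge : ∃ v ∈ Ioo a b, R + |M| * (b - a) ≤ z v
  · obtain ⟨v, hv, hzv⟩ := hlarge
    have hsub : Ioc a v ⊆ Ioo a b := Ioc_subset_Ioo_right hv.2
    have hR : ∀ u ∈ Ioc a v, R ≤ z u := fun u hu => by
      linarith [growth u (hsub hu) v hv hu.2]
    have hdecay : ∀ u ∈ Ioc a v, z u ≤ z v + |K| * (b - a) := fun u hu => by
      have := (convex_Ioc a v).mul_sub_le_sub_of_le_hasDerivAt (fun t ht => hz t (hsub ht))
        (fun t ht => hge t (hsub ht) (hR t ht)) hu ⟨hv.1, le_rfl⟩ hu.2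
      linarith [mul_sub_le_abs_mul_sub (C := K) hu.1 hu.2 hv.2]
    refine ⟨z v + (|K| + |M|) * (b - a), ?_⟩
    rintro _ ⟨u, hu, rfl⟩
    have hba : 0 ≤ b - a := by linarith [hu.1, hu.2]
    rcases le_total u v with huv | hvu
    · linarith [hdecay u ⟨hu.1, huv⟩, mul_nonneg (abs_nonneg M) hba]
    · linarith [growth v hv u hu hvu, mul_nonneg (abs_nonneg K) hba]
  · push Not at hlarge
    exact ⟨R + |M| * (b - a), by rintro _ ⟨u, hu, rfl⟩; exact (hlarge u hu).le⟩

end Limits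

theorem stmt_4_general (α c : ℝ) (hα : 0 < α) (f g h : ℝ → ℝ)
    (hf : ContinuousOn f (Icc 0 1)) (hg : ContinuousOn g (Icc 0 1))
    (hh : ContinuousOn h (Icc 0 1))
    (hhpos : ∀ u ∈ Ioo (0:ℝ) 1, 0 < h u)
    (a b : ℝ) (ha : 0 ≤ a) (hab : a < b) (hb : b ≤ 1)
    (z : ℝ → ℝ)
    (hz : ∀ u ∈ Ioo a b, HasDerivAt z (c * g u - f u - h u / z u ^ α) u)
    (hzpos : ∀ u ∈ Ioo a b, 0 < z u) :
    (∃ la : ℝ, Tendsto z (𝓝[>] a) (𝓝 la)) ∧ (∃ lb : ℝ, Tendsto z (𝓝[<] b) (𝓝 lb)) := by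
  have hsub : Ioo a b ⊆ Ioo 0 1 := fun u hu => ⟨ha.trans_lt hu.1, hu.2.trans_le hb⟩
  obtain ⟨M, hM⟩ := isCompact_Icc.exists_bound_of_continuousOn ((continuousOn_const.mul hg).sub hf)
  obtain ⟨H, hH⟩ := isCompact_Icc.exists_bound_of_continuousOn hh
  have hcoef : ∀ u ∈ Ioo a b, |c * g u - f u| ≤ M ∧ h u ≤ H ∧ 0 < h u := fun u hu =>
    have hu' := Ioo_subset_Icc_self (hsub hu)
    ⟨hM u hu', (le_abs_self _).trans (hH u hu'), hhpos u (hsub hu)⟩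
  have hle : ∀ u ∈ Ioo a b, c * g u - f u - h u / z u ^ α ≤ M := fun u hu => by
    have := div_pos (hcoef u hu).2.2 (rpow_pos_of_pos (hzpos u hu) α)
    linarith [le_abs_self (c * g u - f u), (hcoef u hu).1]
  have hge : ∀ u ∈ Ioo a b, 1 ≤ z u → -(M + H) ≤ c * g u - f u - h u / z u ^ α :=
    fun u hu hz1 => by
      have := div_le_self (hcoef u hu).2.2.le (one_le_rpow hz1 hα.le)
      linarith [neg_abs_le (c * g u - f u), (hcoef u hu).1, (hcoef u hu).2.1]
  exact ⟨exists_tendsto_nhdsGT_of_hasDerivAt_le hab hz hle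
      (bddAbove_image_Ioo_of_hasDerivAt_bounds hz hle hge),
    exists_tendsto_nhdsLT_of_hasDerivAt_le hab hz hle
      ⟨0, by rintro _ ⟨u, hu, rfl⟩; exact (hzpos u hu).le⟩⟩

/-- A positive solution of `ż = c g(u) − f(u) − h(u)/z^α` on `(a,b) ⊆ (0,1)`
has finite limits at both endpoints. -/
theorem stmt_4 (α c : ℝ) (hα : 0 < α) (f g h : ℝ → ℝ)
    (hf : ContinuousOn f (Icc 0 1)) (hg : ContinuousOn g (Icc 0 1))
    (hh : ContinuousOn h (Icc 0 1))
    (hh0 : h 0 = 0) (hh1 : h 1 = 0) (hhpos : ∀ u ∈ Ioo (0:ℝ) 1, 0 < h u)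
    (a b : ℝ) (ha : 0 ≤ a) (hab : a < b) (hb : b ≤ 1)
    (z : ℝ → ℝ)
    (hz : ∀ u ∈ Ioo a b, HasDerivAt z (c * g u - f u - h u / z u ^ α) u)
    (hzpos : ∀ u ∈ Ioo a b, 0 < z u) :
    (∃ la : ℝ, Tendsto z (𝓝[>] a) (𝓝 la)) ∧ (∃ lb : ℝ, Tendsto z (𝓝[<] b) (𝓝 lb)) :=
  stmt_4_general α c hα f g h hf hg hh hhpos a b ha hab hb z hz hzpos
end

section
/- Let z ∈ C¹(a,b) be a positive solution of ż = c g(u) − f(u) − h(u)/z^α on its maximal existence interval (a,b) ⊆ (0,1). Then a = 0, i.e., the solution extends to the left up to 0. -/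
/-!
If `a > 0` then `h(a) > 0`, so just to the right of `a` the singular term `-h/z^α` makes `ż`
negative as soon as `z` is small: going leftwards `z` can only grow there, so it stays bounded
below near `a⁺`. The field is then bounded along the solution, `z` is Lipschitz and has a limit
`L > 0` at `a⁺`, and the Picard–Lindelöf theorem started at `(a, L)` continues `z` to the left of
`a`, contradicting maximality.
-/

open Set Filter Topology Real Metric
open scoped NNReal

theorem le_image_of_hasDerivAt_neg_boundary {z z' : ℝ → ℝ} {u v m : ℝ}
    (hz : ∀ t ∈ Icc u v, HasDerivAt z (z' t) t) (hv : m ≤ z v)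
    (hneg : ∀ t ∈ Ioc u v, z t = m → z' t < 0) : ∀ t ∈ Icc u v, m ≤ z t := by
  -- the forward fencing theorem, applied to `s ↦ -z (-s)` on `[-v, -u]`
  have hderiv : ∀ s ∈ Icc (-v) (-u), HasDerivAt (fun s => -z (-s)) (z' (-s)) s := by
    intro s hs
    have := ((hz (-s) ⟨by linarith [hs.2], by linarith [hs.1]⟩).comp s (hasDerivAt_neg s)).neg
    exact this.congr_deriv (by ring)
  have key := image_le_of_deriv_right_lt_deriv_boundary (a := -v) (b := -u)
    (fun s hs => (hderiv s hs).continuousAt.continuousWithinAt)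
    (fun s hs => (hderiv s (Ico_subset_Icc_self hs)).hasDerivWithinAt)
    (B := fun _ => -m) (by simpa using hv) (fun _ => hasDerivAt_const _ _)
    (fun s hs hs' => hneg (-s) ⟨by linarith [hs.2], by linarith [hs.1]⟩ (by linarith))
  intro t ht
  have := key ⟨neg_le_neg ht.2, neg_le_neg ht.1⟩
  simp only [neg_neg] at this
  linarith

theorem LipschitzOnWith.exists_tendsto_nhdsGT {z : ℝ → ℝ} {a b : ℝ} {K : ℝ≥0} (hab : a < b)
    (hz : LipschitzOnWith K z (Ioo a b)) : ∃ L, Tendsto z (𝓝[>] a) (𝓝 L) := by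
  obtain ⟨Z, hZ, hzZ⟩ := hz.extend_real
  refine ⟨Z a, (hZ.continuous.continuousWithinAt (s := Ioi a) (x := a)).tendsto.congr' ?_⟩
  filter_upwards [Ioo_mem_nhdsGT hab] with t ht using (hzZ ht).symm

theorem exists_eq_forall_mem_Icc_hasDerivWithinAt_left {E : Type*} [NormedAddCommGroup E]
    [NormedSpace ℝ E] [CompleteSpace E] {F : ℝ → E → E} {t₀ a : ℝ} {x₀ : E} {r C K : ℝ≥0}
    (ht₀ : t₀ < a) (hr : 0 < r) (hlip : ∀ t ∈ Icc t₀ a, LipschitzOnWith K (F t) (closedBall x₀ r))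
    (hcont : ∀ x ∈ closedBall x₀ r, ContinuousOn (F · x) (Icc t₀ a))
    (hbound : ∀ t ∈ Icc t₀ a, ∀ x ∈ closedBall x₀ r, ‖F t x‖ ≤ C) :
    ∃ a' ∈ Ico t₀ a, ∃ w : ℝ → E, w a = x₀ ∧
      ∀ t ∈ Icc a' a, HasDerivWithinAt w (F t (w t)) (Icc a' a) t := by
  set a' := max t₀ (a - r / (C + 1))
  have hδ : (0 : ℝ) < r / (C + 1) := by positivity
  have ha' : a' < a := max_lt ht₀ (by linarith)
  have hsub : Icc a' a ⊆ Icc t₀ a := Icc_subset_Icc_left (le_max_left _ _)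
  have hpl : IsPicardLindelof F (tmin := a') (tmax := a) ⟨a, ha'.le, le_rfl⟩ x₀ r 0 C K :=
    { lipschitzOnWith := fun t ht => hlip t (hsub ht)
      continuousOn := fun x hx => (hcont x hx).mono hsub
      norm_le := fun t ht => hbound t (hsub ht)
      mul_max_le := by
        have hlen : a - a' ≤ r / (C + 1) := by linarith [le_max_right t₀ (a - r / (C + 1))]
        calc (C : ℝ) * max (a - a) (a - a') = C * (a - a') := by
              rw [sub_self, max_eq_right (by linarith)]
          _ ≤ C * (r / (C + 1)) := by gcongr
          _ ≤ r - ((0 : ℝ≥0) : ℝ) := by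
            rw [NNReal.coe_zero, sub_zero, mul_div_assoc', div_le_iff₀ (by positivity)]
            nlinarith [r.coe_nonneg] }
  obtain ⟨w, hwa, hw⟩ := hpl.exists_eq_forall_mem_Icc_hasDerivWithinAt₀
  exact ⟨a', ⟨le_max_left _ _, ha'⟩, w, hwa, hw⟩

theorem hasDerivAt_ite_le_of_tendsto {E : Type*} [NormedAddCommGroup E] [NormedSpace ℝ E]
    {F : ℝ → E → E} {w z : ℝ → E} {a' a b : ℝ} {x : E} (hab : a < b)
    (hF : ContinuousAt (Function.uncurry F) (a, x))
    (hw : ∀ t ∈ Icc a' a, HasDerivWithinAt w (F t (w t)) (Icc a' a) t) (hwa : w a = x)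
    (hz : ∀ t ∈ Ioo a b, HasDerivAt z (F t (z t)) t) (hzx : Tendsto z (𝓝[>] a) (𝓝 x)) :
    ∀ t ∈ Ioo a' b, HasDerivAt (fun t => if t ≤ a then w t else z t)
      (F t (if t ≤ a then w t else z t)) t := by
  set W := fun t => if t ≤ a then w t else z t
  have hWz : ∀ t ∈ Ioi a, W =ᶠ[𝓝 t] z := fun t ht => by
    filter_upwards [Ioi_mem_nhds ht] with s hs using if_neg (not_le.2 hs)
  rintro t ⟨ha't, htb⟩
  show HasDerivAt W (F t (W t)) t
  rcases lt_trichotomy t a with hta | rfl | hat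
  · have hWw : W =ᶠ[𝓝 t] w := by
      filter_upwards [Iio_mem_nhds hta] with s hs using if_pos hs.le
    rw [hWw.eq_of_nhds]
    exact ((hw t ⟨ha't.le, hta.le⟩).hasDerivAt (Icc_mem_nhds ha't hta)).congr_of_eventuallyEq hWw
  · have hWa : W t = x := (if_pos le_rfl).trans hwa
    have hleft : HasDerivWithinAt W (F t x) (Iic t) t := by
      have := (hw t ⟨ha't.le, le_rfl⟩).mono_of_mem_nhdsWithin (Icc_mem_nhdsLE ha't)
      rw [hwa] at this
      exact this.congr (fun s hs => if_pos hs) (if_pos le_rfl)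
    have hright : HasDerivWithinAt W (F t x) (Ici t) t := by
      refine hasDerivWithinAt_Ici_of_tendsto_deriv (s := Ioo t b)
        (fun s hs => ((hz s hs).differentiableAt.congr_of_eventuallyEq
          (hWz s hs.1)).differentiableWithinAt) ?_ (Ioo_mem_nhdsGT hab) ?_
      · rw [ContinuousWithinAt, hWa, nhdsWithin_Ioo_eq_nhdsGT hab]
        refine hzx.congr' ?_
        filter_upwards [self_mem_nhdsWithin] with s hs using (if_neg (not_le.2 hs)).symm
      · have hFz : Tendsto (fun s => F s (z s)) (𝓝[>] t) (𝓝 (F t x)) :=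
          hF.tendsto.comp ((tendsto_id.mono_left nhdsWithin_le_nhds).prodMk_nhds hzx)
        refine hFz.congr' ?_
        filter_upwards [Ioo_mem_nhdsGT hab] with s hs
        exact ((hz s hs).congr_of_eventuallyEq (hWz s hs.1)).deriv.symm
    rw [hWa]
    have := hleft.union hright
    rw [Iic_union_Ici] at this
    exact this.hasDerivAt univ_mem
  · have hWz' := hWz t hat
    rw [hWz'.eq_of_nhds]
    exact (hz t ⟨hat, htb⟩).congr_of_eventuallyEq hWz'

noncomputable def odeRhs (α c : ℝ) (f g h : ℝ → ℝ) (u y : ℝ) : ℝ := c * g u - f u - h u / y ^ α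

section odeRhs

variable {α c : ℝ} {f g h : ℝ → ℝ}

theorem exists_norm_odeRhs_le (hα : 0 ≤ α) (hf : ContinuousOn f (Icc 0 1))
    (hg : ContinuousOn g (Icc 0 1)) (hh : ContinuousOn h (Icc 0 1)) {m : ℝ} (hm : 0 < m) :
    ∃ C : ℝ≥0, ∀ t ∈ Icc (0 : ℝ) 1, ∀ y, m ≤ y → ‖odeRhs α c f g h t y‖ ≤ C := by
  have hp : ContinuousOn (fun t => c * g t - f t) (Icc 0 1) := (continuousOn_const.mul hg).sub hf
  obtain ⟨P, hP⟩ := isCompact_Icc.exists_bound_of_continuousOn hp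
  obtain ⟨H, hH⟩ := isCompact_Icc.exists_bound_of_continuousOn hh
  refine ⟨(P + H / m ^ α).toNNReal, fun t ht y hy => ?_⟩
  have hmα : 0 < m ^ α := rpow_pos_of_pos hm α
  have hyα : m ^ α ≤ y ^ α := rpow_le_rpow hm.le hy hα
  calc ‖odeRhs α c f g h t y‖ ≤ ‖c * g t - f t‖ + ‖h t / y ^ α‖ := norm_sub_le _ _
    _ = ‖c * g t - f t‖ + ‖h t‖ / y ^ α := by
        rw [norm_div, Real.norm_of_nonneg (hmα.trans_le hyα).le]
    _ ≤ P + H / m ^ α := by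
        have := (norm_nonneg (h t)).trans (hH t ht)
        gcongr
        exacts [hP t ht, hH t ht]
    _ ≤ _ := le_coe_toNNReal _

theorem exists_lipschitzOnWith_odeRhs (hh : ContinuousOn h (Icc 0 1)) {x₀ r : ℝ} (hr : r < x₀) :
    ∃ K, ∀ t ∈ Icc (0 : ℝ) 1, LipschitzOnWith K (odeRhs α c f g h t) (closedBall x₀ r) := by
  have hpos : ∀ y ∈ closedBall x₀ r, 0 < y := fun y hy => by
    rw [mem_closedBall, Real.dist_eq, abs_le] at hy; linarith [hy.1]
  have hφ : ContDiffOn ℝ 1 (fun y : ℝ => (y ^ α)⁻¹) (closedBall x₀ r) := fun y hy =>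
    ((contDiffAt_rpow_const_of_ne (hpos y hy).ne').inv
      (rpow_pos_of_pos (hpos y hy) α).ne').contDiffWithinAt
  obtain ⟨K, hK⟩ := hφ.exists_lipschitzOnWith one_ne_zero (convex_closedBall _ _)
    (isCompact_closedBall _ _)
  obtain ⟨H, hH⟩ := isCompact_Icc.exists_bound_of_continuousOn hh
  refine ⟨H.toNNReal * K, fun t ht => LipschitzOnWith.of_dist_le_mul fun x hx y hy => ?_⟩
  have hdist : dist (odeRhs α c f g h t x) (odeRhs α c f g h t y)
      = ‖h t‖ * dist (x ^ α)⁻¹ (y ^ α)⁻¹ := by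
    rw [Real.dist_eq, Real.dist_eq, Real.norm_eq_abs, ← abs_mul, ← abs_neg]
    congr 1
    simp only [odeRhs, div_eq_mul_inv]
    ring
  rw [hdist, NNReal.coe_mul, mul_assoc]
  exact mul_le_mul ((hH t ht).trans (le_coe_toNNReal H)) (hK.dist_le_mul x hx y hy)
    dist_nonneg (H.toNNReal.coe_nonneg)

theorem continuousAt_uncurry_odeRhs {a x : ℝ} (hf : ContinuousAt f a) (hg : ContinuousAt g a)
    (hh : ContinuousAt h a) (hx : 0 < x) :
    ContinuousAt (Function.uncurry (odeRhs α c f g h)) (a, x) :=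
  ((continuousAt_const.mul (hg.comp continuousAt_fst)).sub (hf.comp continuousAt_fst)).sub
    ((hh.comp continuousAt_fst).div (continuousAt_snd.rpow_const (Or.inl hx.ne'))
      (rpow_pos_of_pos hx α).ne')

theorem exists_pos_eventually_le_of_hasDerivAt_odeRhs (hα : 0 < α)
    (hf : ContinuousOn f (Icc 0 1)) (hg : ContinuousOn g (Icc 0 1))
    (hh : ContinuousOn h (Icc 0 1)) {a b : ℝ} {z : ℝ → ℝ} (ha : 0 ≤ a) (hab : a < b) (hb : b ≤ 1)
    (hha : 0 < h a) (hz : ∀ u ∈ Ioo a b, HasDerivAt z (odeRhs α c f g h u (z u)) u)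
    (hzpos : ∀ u ∈ Ioo a b, 0 < z u) : ∃ m > 0, ∀ᶠ t in 𝓝[>] a, m ≤ z t := by
  have hp : ContinuousOn (fun t => c * g t - f t) (Icc 0 1) := (continuousOn_const.mul hg).sub hf
  obtain ⟨P, hP⟩ := isCompact_Icc.exists_bound_of_continuousOn hp
  have hP0 : 0 ≤ P := (norm_nonneg _).trans (hP 0 ⟨le_rfl, zero_le_one⟩)
  set η := h a / 2
  have hη : 0 < η := half_pos hha
  have hnhds : 𝓝[>] a ≤ 𝓝[Icc 0 1] a := by
    rw [← nhdsWithin_Ioo_eq_nhdsGT (hab.trans_le hb)]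
    exact nhdsWithin_mono _ (Ioo_subset_Icc_self.trans (Icc_subset_Icc_left ha))
  have hev : ∀ᶠ t in 𝓝[>] a, t ∈ Ioo a b ∧ η < h t :=
    Eventually.and (Ioo_mem_nhdsGT hab) (hnhds (Tendsto.eventually (hh a ⟨ha, (hab.trans_le hb).le⟩)
      (lt_mem_nhds (half_lt_self hha))))
  obtain ⟨u₁, hau₁, hu₁⟩ := mem_nhdsGT_iff_exists_Ioc_subset.1 hev
  have hsol : ∀ t ∈ Ioc a u₁, t ∈ Ioo a b := fun t ht => (hu₁ ht).1
  set m₀ := (η / (P + 1)) ^ α⁻¹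
  have hm₀ : m₀ ^ α = η / (P + 1) := rpow_inv_rpow (by positivity) hα.ne'
  -- below the level `m₀` the singular term `h / z ^ α` beats the bounded part of the field
  have hdecr : ∀ t ∈ Ioc a u₁, z t ≤ m₀ → odeRhs α c f g h t (z t) < 0 := by
    intro t ht hzt
    have hzt0 : 0 < z t := hzpos t (hsol t ht)
    have hzα : 0 < z t ^ α := rpow_pos_of_pos hzt0 α
    have hzα' : z t ^ α ≤ η / (P + 1) := hm₀ ▸ rpow_le_rpow hzt0.le hzt hα.le
    have hpt : c * g t - f t ≤ P :=
      (le_abs_self _).trans (hP t ⟨ha.trans ht.1.le, ((hsol t ht).2.trans_le hb).le⟩)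
    have hsing : P < h t / z t ^ α := by
      rw [lt_div_iff₀ hzα]
      calc P * z t ^ α ≤ (P + 1) * (η / (P + 1)) := by gcongr; linarith
        _ = η := by field_simp
        _ < h t := (hu₁ ht).2
    rw [odeRhs]
    linarith
  refine ⟨min (z u₁) m₀, lt_min (hzpos u₁ (hsol u₁ ⟨hau₁, le_rfl⟩)) (by positivity), ?_⟩
  filter_upwards [Ioc_mem_nhdsGT hau₁] with t ht
  exact le_image_of_hasDerivAt_neg_boundary (z' := fun s => odeRhs α c f g h s (z s))
    (fun s hs => hz s (hsol s ⟨ht.1.trans_le hs.1, hs.2⟩)) (min_le_left _ _)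
    (fun s hs hzs => hdecr s ⟨ht.1.trans_le hs.1.le, hs.2⟩ (hzs.trans_le (min_le_right _ _)))
    t ⟨le_rfl, ht.2⟩

theorem exists_pos_tendsto_of_hasDerivAt_odeRhs (hα : 0 < α)
    (hf : ContinuousOn f (Icc 0 1)) (hg : ContinuousOn g (Icc 0 1))
    (hh : ContinuousOn h (Icc 0 1)) {a b : ℝ} {z : ℝ → ℝ} (ha : 0 ≤ a) (hab : a < b) (hb : b ≤ 1)
    (hha : 0 < h a) (hz : ∀ u ∈ Ioo a b, HasDerivAt z (odeRhs α c f g h u (z u)) u)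
    (hzpos : ∀ u ∈ Ioo a b, 0 < z u) : ∃ L > 0, Tendsto z (𝓝[>] a) (𝓝 L) := by
  obtain ⟨m, hm, hmz⟩ :=
    exists_pos_eventually_le_of_hasDerivAt_odeRhs hα hf hg hh ha hab hb hha hz hzpos
  obtain ⟨u₁, hau₁, hsub⟩ := mem_nhdsGT_iff_exists_Ioo_subset.1 (hmz.and (Ioo_mem_nhdsGT hab))
  obtain ⟨C, hC⟩ := exists_norm_odeRhs_le (c := c) hα.le hf hg hh hm
  have hlip : LipschitzOnWith C z (Ioo a u₁) :=
    (convex_Ioo a u₁).lipschitzOnWith_of_nnnorm_hasDerivWithin_le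
      (fun t ht => (hz t (hsub ht).2).hasDerivWithinAt) fun t ht => by
        rw [← NNReal.coe_le_coe, coe_nnnorm]
        exact hC t ⟨ha.trans (hsub ht).2.1.le, (hsub ht).2.2.le.trans hb⟩ (z t) (hsub ht).1
  obtain ⟨L, hL⟩ := hlip.exists_tendsto_nhdsGT hau₁
  exact ⟨L, hm.trans_le (ge_of_tendsto hL hmz), hL⟩

theorem exists_pos_odeRhs_solution_Icc_left (hα : 0 ≤ α)
    (hf : ContinuousOn f (Icc 0 1)) (hg : ContinuousOn g (Icc 0 1))
    (hh : ContinuousOn h (Icc 0 1)) {a x : ℝ} (ha : 0 < a) (ha1 : a ≤ 1) (hx : 0 < x) :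
    ∃ a' ∈ Ico 0 a, ∃ w : ℝ → ℝ, w a = x ∧
      ∀ t ∈ Icc a' a, HasDerivWithinAt w (odeRhs α c f g h t (w t)) (Icc a' a) t ∧ 0 < w t := by
  have hball : ∀ y ∈ closedBall x (x / 2), x / 2 ≤ y := fun y hy => by
    rw [mem_closedBall, Real.dist_eq, abs_le] at hy; linarith [hy.1]
  have hsub : Icc 0 a ⊆ Icc (0 : ℝ) 1 := Icc_subset_Icc_right ha1
  obtain ⟨C, hC⟩ := exists_norm_odeRhs_le (c := c) hα hf hg hh (half_pos hx)
  obtain ⟨K, hK⟩ := exists_lipschitzOnWith_odeRhs (α := α) (c := c) (f := f) (g := g) hh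
    (half_lt_self hx)
  obtain ⟨a₁, ha₁, w, hwa, hw⟩ :=
    exists_eq_forall_mem_Icc_hasDerivWithinAt_left (r := ⟨x / 2, by positivity⟩) ha
      (NNReal.coe_pos.1 (half_pos hx)) (fun t ht => hK t (hsub ht))
      (fun y _ => (((continuousOn_const.mul hg).sub hf).sub (hh.div_const _)).mono hsub)
      (fun t ht y hy => hC t (hsub ht) y (hball y hy))
  have hwpos : ∀ᶠ t in 𝓝[≤] a, 0 < w t := by
    rw [← nhdsWithin_Icc_eq_nhdsLE ha₁.2]
    exact Tendsto.eventually (hw a ⟨ha₁.2.le, le_rfl⟩).continuousWithinAt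
      (lt_mem_nhds (hwa ▸ hx))
  obtain ⟨l, hla, hl⟩ := mem_nhdsLE_iff_exists_Icc_subset.1 hwpos
  refine ⟨max a₁ l, ⟨ha₁.1.trans (le_max_left _ _), max_lt ha₁.2 hla⟩, w, hwa, fun t ht =>
    ⟨(hw t ⟨(le_max_left _ _).trans ht.1, ht.2⟩).mono (Icc_subset_Icc_left (le_max_left _ _)),
      hl ⟨(le_max_right _ _).trans ht.1, ht.2⟩⟩⟩

end odeRhs

theorem stmt_5_general (α c : ℝ) (hα : 0 < α) (f g h : ℝ → ℝ)
    (hf : ContinuousOn f (Icc 0 1)) (hg : ContinuousOn g (Icc 0 1))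
    (hh : ContinuousOn h (Icc 0 1))
    (hhpos : ∀ u ∈ Ioo (0:ℝ) 1, 0 < h u)
    (a b : ℝ) (ha : 0 ≤ a) (hab : a < b) (hb : b ≤ 1)
    (z : ℝ → ℝ)
    (hz : ∀ u ∈ Ioo a b, HasDerivAt z (c * g u - f u - h u / z u ^ α) u)
    (hzpos : ∀ u ∈ Ioo a b, 0 < z u)
    (hmax : ∀ a' : ℝ, 0 ≤ a' → a' < a →
      ¬ ∃ w : ℝ → ℝ,
        (∀ u ∈ Ioo a' b, HasDerivAt w (c * g u - f u - h u / w u ^ α) u ∧ 0 < w u) ∧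
        (∀ u ∈ Ioo a b, w u = z u)) :
    a = 0 := by
  by_contra ha0
  have ha₀ : 0 < a := ha.lt_of_ne' ha0
  have ha1 : a < 1 := hab.trans_le hb
  obtain ⟨L, hL, hzL⟩ := exists_pos_tendsto_of_hasDerivAt_odeRhs hα hf hg hh ha hab hb
    (hhpos a ⟨ha₀, ha1⟩) hz hzpos
  obtain ⟨a', ha', w, hwa, hw⟩ := exists_pos_odeRhs_solution_Icc_left (c := c) hα.le hf hg hh ha₀
    ha1.le hL
  have hIcc : Icc (0 : ℝ) 1 ∈ 𝓝 a := Icc_mem_nhds ha₀ ha1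
  have hglued := hasDerivAt_ite_le_of_tendsto hab
    (continuousAt_uncurry_odeRhs (hf.continuousAt hIcc) (hg.continuousAt hIcc)
      (hh.continuousAt hIcc) hL) (fun t ht => (hw t ht).1) hwa hz hzL
  refine hmax a' ha'.1 ha'.2
    ⟨fun t => if t ≤ a then w t else z t, fun t ht => ⟨hglued t ht, ?_⟩,
      fun t ht => if_neg (not_le.2 ht.1)⟩
  dsimp only
  split_ifs with hta
  · exact (hw t ⟨ht.1.le, hta⟩).2
  · exact hzpos t ⟨not_le.1 hta, ht.2⟩

/-- A positive solution of `ż = c g(u) − f(u) − h(u)/z^α` defined on its maximal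
existence interval `(a,b) ⊆ (0,1)` satisfies `a = 0`: no positive solution on a
larger interval `(a',b)` with `a' < a` can restrict to `z`. -/
theorem stmt_5 (α c : ℝ) (hα : 0 < α) (f g h : ℝ → ℝ)
    (hf : ContinuousOn f (Icc 0 1)) (hg : ContinuousOn g (Icc 0 1))
    (hh : ContinuousOn h (Icc 0 1))
    (hh0 : h 0 = 0) (hh1 : h 1 = 0) (hhpos : ∀ u ∈ Ioo (0:ℝ) 1, 0 < h u)
    (a b : ℝ) (ha : 0 ≤ a) (hab : a < b) (hb : b ≤ 1)
    (z : ℝ → ℝ)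
    (hz : ∀ u ∈ Ioo a b, HasDerivAt z (c * g u - f u - h u / z u ^ α) u)
    (hzpos : ∀ u ∈ Ioo a b, 0 < z u)
    (hmax : ∀ a' : ℝ, 0 ≤ a' → a' < a →
      ¬ ∃ w : ℝ → ℝ,
        (∀ u ∈ Ioo a' b, HasDerivAt w (c * g u - f u - h u / w u ^ α) u ∧ 0 < w u) ∧
        (∀ u ∈ Ioo a b, w u = z u)) :
    a = 0 :=
  stmt_5_general α c hα f g h hf hg hh hhpos a b ha hab hb z hz hzpos hmax
end

section
/- Let z be a positive solution of ż = c g(u) − f(u) − h(u)/z^α on (0,1) with z(0⁺) = 0, and assume the limit h_{α,0} := lim_{u→0⁺} h(u)/u^α exists in [0,+∞]. Then h_{α,0} < +∞, the limit λ := lim_{u→0⁺} z(u)/u exists and is finite, and λ satisfies λ^(α+1) − (c g(0) − f(0))·λ^α + h_{α,0} = 0. -/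
/-!
Write `φ = z / u`, `q = h / u ^ α` and `b = c g - f`. The equation becomes
`u φ' = drift α (b u) (q u) φ = b u - φ - q u * φ ^ (-α)`, and for `s > 0` the zeros of
`drift α b(0) l` are those of `η₀`. Since `z' ≤ b`, `φ` is bounded above; and
`h / z ^ α = q / φ ^ α` cannot tend to `+∞`, as that would force `z' ≤ -1` near `0`, hence `z < 0`.
So `h_{α,0}` is finite. If `φ` oscillated, each level `t` strictly between its `liminf` and
`limsup` would be crossed in both directions arbitrarily close to `0`, which is impossible unless
`drift t = 0`; but `drift` vanishes on no interval. Hence `φ → λ`, and `drift λ ≠ 0` would give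
`|φ'| ≥ κ / u` near `0`, so that `φ` diverges like `log u`. When `λ = 0`, a positive `h_{α,0}`
would again make `h / z ^ α` blow up.
-/

open Set Filter Topology Real

theorem eventually_le_mul_of_deriv_le {z z' : ℝ → ℝ} {K : ℝ}
    (hz : ∀ᶠ u in 𝓝[>] 0, HasDerivAt z (z' u) u) (hz' : ∀ᶠ u in 𝓝[>] 0, z' u ≤ K)
    (hz0 : Tendsto z (𝓝[>] 0) (𝓝 0)) : ∀ᶠ u in 𝓝[>] 0, z u ≤ K * u := by
  obtain ⟨δ, hδ, hsub⟩ := mem_nhdsGT_iff_exists_Ioo_subset.1 (hz.and hz')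
  have hanti : AntitoneOn (fun v => z v - K * v) (Ioo 0 δ) := by
    refine antitoneOn_of_hasDerivWithinAt_nonpos (convex_Ioo 0 δ) (f' := fun v => z' v - K)
      (fun v hv => (hsub hv).1.continuousAt.continuousWithinAt.sub (by fun_prop)) ?_ ?_ <;>
      rw [interior_Ioo] <;> intro v hv
    · simpa using ((hsub hv).1.fun_sub ((hasDerivAt_id v).const_mul K)).hasDerivWithinAt
    · exact sub_nonpos.2 (hsub hv).2
  have hlim : Tendsto (fun v => z v - K * v) (𝓝[>] 0) (𝓝 0) := by
    have hK : Tendsto (fun v => K * v) (𝓝[>] 0) (𝓝 0) :=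
      ((continuous_const_mul K).tendsto' 0 0 (mul_zero K)).mono_left nhdsWithin_le_nhds
    simpa using hz0.sub hK
  filter_upwards [Ioo_mem_nhdsGT hδ] with u hu
  have : z u - K * u ≤ 0 := ge_of_tendsto hlim <| by
    filter_upwards [Ioo_mem_nhdsGT hu.1] with v hv
    exact hanti ⟨hv.1, hv.2.trans hu.2⟩ hu hv.2.le
  linarith

theorem tendsto_atTop_of_deriv_le_neg_div {φ φ' : ℝ → ℝ} {κ : ℝ} (hκ : 0 < κ)
    (hφ : ∀ᶠ u in 𝓝[>] 0, HasDerivAt φ (φ' u) u) (hφ' : ∀ᶠ u in 𝓝[>] 0, φ' u ≤ -κ / u) :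
    Tendsto φ (𝓝[>] 0) atTop := by
  obtain ⟨δ, hδ : 0 < δ, hsub⟩ := mem_nhdsGT_iff_exists_Ioo_subset.1 (hφ.and hφ')
  have hanti : AntitoneOn (fun v => φ v + κ * log v) (Ioo 0 δ) := by
    refine antitoneOn_of_hasDerivWithinAt_nonpos (convex_Ioo 0 δ) (f' := fun v => φ' v + κ / v)
      (fun v hv => ((hsub hv).1.continuousAt.add
        ((continuousAt_log hv.1.ne').const_mul κ)).continuousWithinAt) ?_ ?_ <;>
      rw [interior_Ioo] <;> intro v hv
    · simpa [div_eq_mul_inv] using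
        ((hsub hv).1.fun_add ((hasDerivAt_log hv.1.ne').const_mul κ)).hasDerivWithinAt
    · linarith [(hsub hv).2, neg_div v κ]
  have hu : δ / 2 ∈ Ioo 0 δ := ⟨by positivity, by linarith⟩
  have hlog : Tendsto (fun v => φ (δ / 2) + κ * log (δ / 2) - κ * log v) (𝓝[>] 0) atTop :=
    tendsto_atTop_add_const_left _ _ (tendsto_neg_atBot_atTop.comp
      (tendsto_log_nhdsGT_zero.const_mul_atBot hκ))
  refine tendsto_atTop_mono' _ ?_ hlog
  filter_upwards [Ioo_mem_nhdsGT hu.1] with v hv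
  linarith [hanti ⟨hv.1, hv.2.trans hu.2⟩ hu hv.2.le]

theorem not_frequently_gt_of_frequently_lt_of_deriv_neg {φ φ' : ℝ → ℝ} {t : ℝ}
    (hφ : ∀ᶠ u in 𝓝[>] 0, HasDerivAt φ (φ' u) u) (hφ' : ∀ᶠ u in 𝓝[>] 0, φ u = t → φ' u < 0)
    (hlt : ∃ᶠ u in 𝓝[>] 0, φ u < t) : ¬ ∃ᶠ u in 𝓝[>] 0, t < φ u := by
  intro hgt
  obtain ⟨δ, hδ, hsub⟩ := mem_nhdsGT_iff_exists_Ioo_subset.1 (hφ.and hφ')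
  obtain ⟨b, hb, hbδ⟩ := (hgt.and_eventually (Ioo_mem_nhdsGT hδ)).exists
  obtain ⟨a, ha, hab⟩ := (hlt.and_eventually (Ioo_mem_nhdsGT hbδ.1)).exists
  have hsub' : Icc a b ⊆ Ioo 0 δ := fun x hx => ⟨hab.1.trans_le hx.1, hx.2.trans_lt hbδ.2⟩
  have := image_le_of_deriv_right_lt_deriv_boundary' (B := fun _ => t) (B' := fun _ => 0)
    (fun x hx => (hsub (hsub' hx)).1.continuousAt.continuousWithinAt)
    (fun x hx => (hsub (hsub' (Ico_subset_Icc_self hx))).1.hasDerivWithinAt) ha.le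
    continuousOn_const (fun _ _ => hasDerivWithinAt_const _ _ _)
    (fun x hx => (hsub (hsub' (Ico_subset_Icc_self hx))).2) ⟨hab.2.le, le_rfl⟩
  exact hb.not_ge this

theorem Filter.Tendsto.div_rpow_atTop {ι : Type*} {F : Filter ι} {q φ : ι → ℝ} {α l : ℝ}
    (hα : 0 < α) (hl : 0 < l) (hq : Tendsto q F (𝓝 l)) (hφ : Tendsto φ F (𝓝[>] 0)) :
    Tendsto (fun i => q i / φ i ^ α) F atTop := by
  have hpow : Tendsto (fun i => φ i ^ α) F (𝓝[>] 0) := by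
    refine tendsto_nhdsWithin_iff.2 ⟨?_, ?_⟩
    · simpa [Function.comp_def, zero_rpow hα.ne'] using
        (continuousAt_rpow_const 0 α (Or.inr hα.le)).tendsto.comp
          (tendsto_nhds_of_tendsto_nhdsWithin hφ)
    · exact (eventually_mem_of_tendsto_nhdsWithin hφ).mono fun i hi => rpow_pos_of_pos hi α
  simpa [div_eq_mul_inv] using hq.pos_mul_atTop hl (tendsto_inv_nhdsGT_zero.comp hpow)

theorem Filter.Tendsto.atTop_div_rpow {ι : Type*} {F : Filter ι} {q φ : ι → ℝ} {α K : ℝ}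
    (hα : 0 ≤ α) (hq : Tendsto q F atTop) (hφ0 : ∀ᶠ i in F, 0 < φ i) (hφK : ∀ᶠ i in F, φ i ≤ K) :
    Tendsto (fun i => q i / φ i ^ α) F atTop := by
  have hK : 0 < max K 1 ^ α := rpow_pos_of_pos (lt_max_of_lt_right one_pos) α
  refine tendsto_atTop_mono' _ ?_ (hq.atTop_div_const hK)
  filter_upwards [hq.eventually_ge_atTop 0, hφ0, hφK] with i hqi hφi hφKi
  exact div_le_div_of_nonneg_left hqi (rpow_pos_of_pos hφi α)
    (rpow_le_rpow hφi.le (hφKi.trans (le_max_left K 1)) hα)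

noncomputable def drift (α β l s : ℝ) : ℝ := β - s - l * s ^ (-α)

theorem eventually_abs_drift_sub_lt {α β l t e : ℝ} {b q : ℝ → ℝ}
    (hb : Tendsto b (𝓝[>] 0) (𝓝 β)) (hq : Tendsto q (𝓝[>] 0) (𝓝 l)) (ht : 0 < t)
    (he : 0 < e) : ∃ ε > 0, ∀ᶠ u in 𝓝[>] 0, ∀ s, |s - t| < ε →
      |drift α (b u) (q u) s - drift α β l t| < e := by
  have hcont : ContinuousAt (fun p : ℝ × ℝ × ℝ => drift α p.1 p.2.1 p.2.2) (β, l, t) := by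
    unfold drift
    exact (continuousAt_fst.sub continuousAt_snd.snd).sub
      (continuousAt_snd.fst.mul (continuousAt_snd.snd.rpow_const (Or.inl ht.ne')))
  obtain ⟨ε, hε, hball⟩ := Metric.continuousAt_iff.1 hcont e he
  refine ⟨ε, hε, ?_⟩
  filter_upwards [hb (Metric.ball_mem_nhds β hε), hq (Metric.ball_mem_nhds l hε)]
    with u hbu hqu s hs
  refine hball (x := (b u, q u, s)) ?_
  simp only [Prod.dist_eq, Real.dist_eq]
  exact max_lt hbu (max_lt hqu hs)

theorem hasDerivAt_drift {α β l s : ℝ} (hs : 0 < s) :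
    HasDerivAt (drift α β l) (-1 + l * α * s ^ (-α - 1)) s :=
  (((hasDerivAt_id' s).const_sub β).fun_sub
    ((hasDerivAt_rpow_const (p := -α) (Or.inl hs.ne')).const_mul l)).congr_deriv (by ring)

theorem not_forall_drift_eq_zero {α β l m L : ℝ} (hα : α ≠ -1) (hm : 0 ≤ m) (hmL : m < L) :
    ¬ ∀ t ∈ Ioo m L, drift α β l t = 0 := by
  intro hzero
  have hcrit : ∀ t ∈ Ioo m L, l * α * t ^ (-α - 1) = 1 := fun t ht => by
    have hconst : drift α β l =ᶠ[𝓝 t] fun _ => 0 :=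
      eventually_of_mem (Ioo_mem_nhds ht.1 ht.2) hzero
    linarith [(hasDerivAt_drift (hm.trans_lt ht.1)).unique
      ((hasDerivAt_const t 0).congr_of_eventuallyEq hconst)]
  have h1 : (m + L) / 2 ∈ Ioo m L := ⟨by linarith, by linarith⟩
  have h2 : (3 * m + L) / 4 ∈ Ioo m L := ⟨by linarith, by linarith⟩
  have hpow : ((m + L) / 2) ^ (-α - 1) = ((3 * m + L) / 4) ^ (-α - 1) := by
    have hlα : l * α ≠ 0 := fun h => by simpa [h] using hcrit _ h1
    exact mul_left_cancel₀ hlα ((hcrit _ h1).trans (hcrit _ h2).symm)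
  have := rpow_left_injOn (by contrapose! hα; linarith) (by simp; linarith) (by simp; linarith) hpow
  linarith

theorem rpow_add_one_sub_mul_rpow_add_eq_neg_mul_drift {α β l s : ℝ} (hs : 0 < s) :
    s ^ (α + 1) - β * s ^ α + l = -(s ^ α * drift α β l s) := by
  rw [drift, rpow_add_one hs.ne', rpow_neg hs.le]
  have : 0 < s ^ α := rpow_pos_of_pos hs α
  field_simp
  ring

section RescaledEquation

variable {α β l : ℝ} {b q φ : ℝ → ℝ}

theorem drift_eq_zero_of_frequently (hb : Tendsto b (𝓝[>] 0) (𝓝 β))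
    (hq : Tendsto q (𝓝[>] 0) (𝓝 l))
    (hφ : ∀ᶠ u in 𝓝[>] 0, HasDerivAt φ (drift α (b u) (q u) (φ u) / u) u) {t : ℝ} (ht : 0 < t)
    (hlt : ∃ᶠ u in 𝓝[>] 0, φ u < t) (hgt : ∃ᶠ u in 𝓝[>] 0, t < φ u) : drift α β l t = 0 := by
  by_contra hne
  obtain ⟨ε, hε, hband⟩ := eventually_abs_drift_sub_lt hb hq ht (abs_pos.2 hne)
  rcases lt_or_gt_of_ne hne with hneg | hpos
  · refine not_frequently_gt_of_frequently_lt_of_deriv_neg hφ ?_ hlt hgt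
    filter_upwards [hband, self_mem_nhdsWithin] with u hu (hu0 : 0 < u) heq
    have := hu t (by simpa using hε)
    rw [abs_of_neg hneg, abs_lt] at this
    rw [heq]
    exact div_neg_of_neg_of_pos (by linarith) hu0
  · refine not_frequently_gt_of_frequently_lt_of_deriv_neg (t := -t) (hφ.mono fun u h => h.neg) ?_
      (hgt.mono fun u h => neg_lt_neg h) (hlt.mono fun u h => neg_lt_neg h)
    filter_upwards [hband, self_mem_nhdsWithin] with u hu (hu0 : 0 < u) heq
    have := hu t (by simpa using hε)
    rw [abs_of_pos hpos, abs_lt] at this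
    rw [neg_inj.1 heq, neg_lt_zero]
    exact div_pos (by linarith) hu0

theorem drift_eq_zero_of_tendsto (hb : Tendsto b (𝓝[>] 0) (𝓝 β))
    (hq : Tendsto q (𝓝[>] 0) (𝓝 l))
    (hφ : ∀ᶠ u in 𝓝[>] 0, HasDerivAt φ (drift α (b u) (q u) (φ u) / u) u) {L : ℝ} (hL : 0 < L)
    (hφL : Tendsto φ (𝓝[>] 0) (𝓝 L)) : drift α β l L = 0 := by
  by_contra hne
  obtain ⟨ε, hε, hband⟩ := eventually_abs_drift_sub_lt hb hq hL (half_pos (abs_pos.2 hne))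
  have hnear : ∀ᶠ u in 𝓝[>] 0,
      |drift α (b u) (q u) (φ u) - drift α β l L| < |drift α β l L| / 2 := by
    filter_upwards [hband, Metric.tendsto_nhds.1 hφL ε hε] with u hu hφu using hu _ hφu
  rcases lt_or_gt_of_ne hne with hneg | hpos
  · refine not_tendsto_nhds_of_tendsto_atTop
      (tendsto_atTop_of_deriv_le_neg_div (by linarith : 0 < -(drift α β l L / 2)) hφ ?_) L hφL
    filter_upwards [hnear, self_mem_nhdsWithin] with u hu (hu0 : 0 < u)
    rw [abs_of_neg hneg, abs_lt] at hu
    exact div_le_div_of_nonneg_right (by linarith) hu0.le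
  · refine not_tendsto_nhds_of_tendsto_atTop
      (tendsto_atTop_of_deriv_le_neg_div (half_pos hpos) (hφ.mono fun u h => h.neg) ?_)
      (-L) hφL.neg
    filter_upwards [hnear, self_mem_nhdsWithin] with u hu (hu0 : 0 < u)
    rw [abs_of_pos hpos, abs_lt] at hu
    rw [← neg_div]
    exact div_le_div_of_nonneg_right (by linarith) hu0.le

theorem exists_tendsto_of_bounded (hb : Tendsto b (𝓝[>] 0) (𝓝 β))
    (hq : Tendsto q (𝓝[>] 0) (𝓝 l))
    (hφ : ∀ᶠ u in 𝓝[>] 0, HasDerivAt φ (drift α (b u) (q u) (φ u) / u) u) (hα : α ≠ -1) {B : ℝ}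
    (hφ0 : ∀ᶠ u in 𝓝[>] 0, 0 ≤ φ u) (hφB : ∀ᶠ u in 𝓝[>] 0, φ u ≤ B) :
    ∃ L, Tendsto φ (𝓝[>] 0) (𝓝 L) := by
  have hbdd : IsBoundedUnder (· ≤ ·) (𝓝[>] 0) φ := ⟨B, hφB⟩
  have hbdd' : IsBoundedUnder (· ≥ ·) (𝓝[>] 0) φ := ⟨0, hφ0⟩
  have hm : 0 ≤ liminf φ (𝓝[>] 0) := le_liminf_of_le hbdd.isCoboundedUnder_ge hφ0
  obtain hmL | hmL := (liminf_le_limsup hbdd hbdd').lt_or_eq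
  · refine absurd (fun t ht => ?_) (not_forall_drift_eq_zero (β := β) (l := l) hα hm hmL)
    exact drift_eq_zero_of_frequently hb hq hφ (hm.trans_lt ht.1)
      (frequently_lt_of_liminf_lt hbdd.isCoboundedUnder_ge ht.1)
      (frequently_lt_of_lt_limsup hbdd'.isCoboundedUnder_le ht.2)
  · exact ⟨_, tendsto_of_liminf_eq_limsup hmL rfl hbdd hbdd'⟩

end RescaledEquation

section OriginalEquation

variable {α β : ℝ} {b h z : ℝ → ℝ}

theorem eventually_div_le (hb : Tendsto b (𝓝[>] 0) (𝓝 β))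
    (hz : ∀ᶠ u in 𝓝[>] 0, HasDerivAt z (b u - h u / z u ^ α) u)
    (hz0 : Tendsto z (𝓝[>] 0) (𝓝 0)) (hh : ∀ᶠ u in 𝓝[>] 0, 0 ≤ h u / z u ^ α) {K : ℝ}
    (hK : β < K) : ∀ᶠ u in 𝓝[>] 0, z u / u ≤ K := by
  have hz' : ∀ᶠ u in 𝓝[>] 0, b u - h u / z u ^ α ≤ K := by
    filter_upwards [hb.eventually (eventually_lt_nhds hK), hh] with u hbu hhu
    linarith
  filter_upwards [eventually_le_mul_of_deriv_le hz hz' hz0, self_mem_nhdsWithin]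
    with u hu (hu0 : 0 < u)
  exact (div_le_iff₀ hu0).2 hu

theorem not_tendsto_div_rpow_atTop (hb : Tendsto b (𝓝[>] 0) (𝓝 β))
    (hz : ∀ᶠ u in 𝓝[>] 0, HasDerivAt z (b u - h u / z u ^ α) u)
    (hz0 : Tendsto z (𝓝[>] 0) (𝓝 0)) (hzpos : ∀ᶠ u in 𝓝[>] 0, 0 < z u) :
    ¬ Tendsto (fun u => h u / z u ^ α) (𝓝[>] 0) atTop := by
  intro hblow
  have hz' : ∀ᶠ u in 𝓝[>] 0, b u - h u / z u ^ α ≤ -1 := by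
    filter_upwards [hb.eventually (eventually_lt_nhds (lt_add_one β)),
      hblow.eventually_ge_atTop (β + 2)] with u hbu hhu
    linarith
  obtain ⟨u, hu, hzu, hu0⟩ := ((eventually_le_mul_of_deriv_le hz hz' hz0).and
    (hzpos.and self_mem_nhdsWithin)).exists
  linarith [show (0 : ℝ) < u from hu0]

theorem hasDerivAt_div_id {u b₀ h₀ : ℝ} (hu : 0 < u) (hzu : 0 < z u)
    (hz : HasDerivAt z (b₀ - h₀ / z u ^ α) u) :
    HasDerivAt (fun v => z v / v) (drift α b₀ (h₀ / u ^ α) (z u / u) / u) u := by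
  refine (hz.div (hasDerivAt_id' u) hu.ne').congr_deriv ?_
  rw [drift, rpow_neg (div_pos hzu hu).le, div_rpow hzu.le hu.le]
  have : 0 < u ^ α := rpow_pos_of_pos hu α
  have : 0 < z u ^ α := rpow_pos_of_pos hzu α
  field_simp
  ring

end OriginalEquation

theorem stmt_6_general (α c : ℝ) (hα : 0 < α) (f g h : ℝ → ℝ)
    (hf : ContinuousOn f (Icc 0 1)) (hg : ContinuousOn g (Icc 0 1))
    (hhpos : ∀ u ∈ Ioo (0:ℝ) 1, 0 < h u)
    (z : ℝ → ℝ)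
    (hz : ∀ u ∈ Ioo (0:ℝ) 1, HasDerivAt z (c * g u - f u - h u / z u ^ α) u)
    (hzpos : ∀ u ∈ Ioo (0:ℝ) 1, 0 < z u)
    (hz0 : Tendsto z (𝓝[>] (0:ℝ)) (𝓝 0))
    (hlim : (∃ l : ℝ, 0 ≤ l ∧ Tendsto (fun u => h u / u ^ α) (𝓝[>] (0:ℝ)) (𝓝 l)) ∨
      Tendsto (fun u => h u / u ^ α) (𝓝[>] (0:ℝ)) atTop) :
    ∃ l lam : ℝ, 0 ≤ l ∧
      Tendsto (fun u => h u / u ^ α) (𝓝[>] (0:ℝ)) (𝓝 l) ∧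
      0 ≤ lam ∧
      Tendsto (fun u => z u / u) (𝓝[>] (0:ℝ)) (𝓝 lam) ∧
      lam ^ (α + 1) - (c * g 0 - f 0) * lam ^ α + l = 0 := by
  have hI : ∀ᶠ u in 𝓝[>] (0:ℝ), u ∈ Ioo 0 1 := Ioo_mem_nhdsGT one_pos
  have hIcc : Icc (0:ℝ) 1 ∈ 𝓝[>] 0 := mem_of_superset hI Ioo_subset_Icc_self
  have hb : Tendsto (fun u => c * g u - f u) (𝓝[>] 0) (𝓝 (c * g 0 - f 0)) :=
    (((hg 0 ⟨le_rfl, zero_le_one⟩).mono_of_mem_nhdsWithin hIcc).const_mul c).sub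
      ((hf 0 ⟨le_rfl, zero_le_one⟩).mono_of_mem_nhdsWithin hIcc)
  have hz' := hI.mono hz
  have hblow := not_tendsto_div_rpow_atTop hb hz' hz0 (hI.mono hzpos)
  have hslope_pos : ∀ᶠ u in 𝓝[>] 0, 0 < z u / u :=
    hI.mono fun u hu => div_pos (hzpos u hu) hu.1
  have hslope_le := eventually_div_le hb hz' hz0 (hI.mono fun u hu =>
    (div_pos (hhpos u hu) (rpow_pos_of_pos (hzpos u hu) α)).le) (lt_add_one _)
  have hslope_deriv := hI.mono fun u hu => hasDerivAt_div_id hu.1 (hzpos u hu) (hz u hu)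
  have hratio : (fun u => h u / u ^ α / (z u / u) ^ α) =ᶠ[𝓝[>] 0] fun u => h u / z u ^ α := by
    filter_upwards [hI] with u hu
    rw [div_rpow (hzpos u hu).le hu.1.le, div_div_div_cancel_right₀ (rpow_pos_of_pos hu.1 α).ne']
  obtain ⟨l, hl0, hq⟩ := hlim.resolve_right fun hq =>
    hblow ((hq.atTop_div_rpow hα.le hslope_pos hslope_le).congr' hratio)
  obtain ⟨L, hL⟩ := exists_tendsto_of_bounded hb hq hslope_deriv (by linarith)
    (hslope_pos.mono fun _ => le_of_lt) hslope_le
  have hL0 : 0 ≤ L := ge_of_tendsto hL (hslope_pos.mono fun _ => le_of_lt)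
  refine ⟨l, L, hl0, hq, hL0, hL, ?_⟩
  rcases hL0.eq_or_lt with rfl | hLpos
  · obtain rfl : 0 = l := hl0.eq_or_lt.resolve_right fun hl => hblow <|
      (hq.div_rpow_atTop hα hl (tendsto_nhdsWithin_iff.2 ⟨hL, hslope_pos⟩)).congr' hratio
    simp [zero_rpow hα.ne', zero_rpow (by linarith : α + 1 ≠ 0)]
  · rw [rpow_add_one_sub_mul_rpow_add_eq_neg_mul_drift hLpos,
      drift_eq_zero_of_tendsto hb hq hslope_deriv hLpos hL, mul_zero, neg_zero]

/-- Boundary analysis at `u = 0`: if `z` is a positive solution on `(0,1)` with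
`z(0⁺) = 0` and the limit `h_{α,0} = lim_{u→0⁺} h(u)/u^α` exists in `[0,+∞]`,
then `h_{α,0}` is finite, `λ := lim_{u→0⁺} z(u)/u` exists and is finite, and
`λ^(α+1) − (c g(0) − f(0)) λ^α + h_{α,0} = 0`. -/
theorem stmt_6 (α c : ℝ) (hα : 0 < α) (f g h : ℝ → ℝ)
    (hf : ContinuousOn f (Icc 0 1)) (hg : ContinuousOn g (Icc 0 1))
    (hh : ContinuousOn h (Icc 0 1))
    (hh0 : h 0 = 0) (hh1 : h 1 = 0) (hhpos : ∀ u ∈ Ioo (0:ℝ) 1, 0 < h u)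
    (z : ℝ → ℝ)
    (hz : ∀ u ∈ Ioo (0:ℝ) 1, HasDerivAt z (c * g u - f u - h u / z u ^ α) u)
    (hzpos : ∀ u ∈ Ioo (0:ℝ) 1, 0 < z u)
    (hz0 : Tendsto z (𝓝[>] (0:ℝ)) (𝓝 0))
    (hlim : (∃ l : ℝ, 0 ≤ l ∧ Tendsto (fun u => h u / u ^ α) (𝓝[>] (0:ℝ)) (𝓝 l)) ∨
      Tendsto (fun u => h u / u ^ α) (𝓝[>] (0:ℝ)) atTop) :
    ∃ l lam : ℝ, 0 ≤ l ∧
      Tendsto (fun u => h u / u ^ α) (𝓝[>] (0:ℝ)) (𝓝 l) ∧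
      0 ≤ lam ∧
      Tendsto (fun u => z u / u) (𝓝[>] (0:ℝ)) (𝓝 lam) ∧
      lam ^ (α + 1) - (c * g 0 - f 0) * lam ^ α + l = 0 :=
  stmt_6_general α c hα f g h hf hg hhpos z hz hzpos hz0 hlim
end

section
/- Assume lim_{u→0⁺} h(u)/u^α = +∞. Then for every c ∈ ℝ, problem (P) admits no solution. -/
open Set Filter Topology Real

/-- If `lim_{u→0⁺} h(u)/u^α = +∞`, then for every `c ∈ ℝ` problem (P) has no
solution. -/
theorem stmt_7 (α : ℝ) (hα : 0 < α) (f g h : ℝ → ℝ)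
    (hf : ContinuousOn f (Icc 0 1)) (hg : ContinuousOn g (Icc 0 1))
    (hh : ContinuousOn h (Icc 0 1))
    (hh0 : h 0 = 0) (hh1 : h 1 = 0) (hhpos : ∀ u ∈ Ioo (0:ℝ) 1, 0 < h u)
    (hlim : Tendsto (fun u => h u / u ^ α) (𝓝[>] (0:ℝ)) atTop) :
    ∀ c : ℝ, ¬ ∃ z : ℝ → ℝ,
      (∀ u ∈ Ioo (0:ℝ) 1, HasDerivAt z (c * g u - f u - h u / z u ^ α) u) ∧
      (∀ u ∈ Ioo (0:ℝ) 1, 0 < z u) ∧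
      Tendsto z (𝓝[>] (0:ℝ)) (𝓝 0) ∧
      Tendsto z (𝓝[<] (1:ℝ)) (𝓝 0) := by
  intro c
  rintro ⟨z, hz', hzpos, hz0, hz1⟩
  -- A bound for c*g - f on [0,1]
  obtain ⟨M₀, hM₀⟩ : ∃ M₀, ∀ u ∈ Icc (0:ℝ) 1, c * g u - f u ≤ M₀ := by
    obtain ⟨M₀, hM₀⟩ := (isCompact_Icc.bddAbove_image
      ((continuousOn_const.mul hg).sub hf))
    exact ⟨M₀, fun u hu => hM₀ (mem_image_of_mem _ hu)⟩
  set M := max M₀ 1 with hMdef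
  have hM1 : (1:ℝ) ≤ M := le_max_right _ _
  have hMpos : (0:ℝ) < M := lt_of_lt_of_le one_pos hM1
  have hbound : ∀ u ∈ Ioo (0:ℝ) 1, c * g u - f u ≤ M := fun u hu =>
    (hM₀ u (Ioo_subset_Icc_self hu)).trans (le_max_left _ _)
  have hderiv_le : ∀ u ∈ Ioo (0:ℝ) 1, c * g u - f u - h u / z u ^ α ≤ M := by
    intro u hu
    have hpos : 0 < h u / z u ^ α :=
      div_pos (hhpos u hu) (Real.rpow_pos_of_pos (hzpos u hu) α)
    linarith [hbound u hu]
  have hcont : ∀ x ∈ Ioo (0:ℝ) 1, ContinuousAt z x := fun x hx => (hz' x hx).continuousAt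
  -- z u ≤ M * u on (0,1)
  have hzle : ∀ u ∈ Ioo (0:ℝ) 1, z u ≤ M * u := by
    intro u hu
    have key : ∀ v ∈ Ioo (0:ℝ) u, z u - z v ≤ M * (u - v) := by
      intro v hv
      have hvu : v < u := hv.2
      have hsub : Icc v u ⊆ Ioo 0 1 := fun x hx =>
        ⟨lt_of_lt_of_le hv.1 hx.1, lt_of_le_of_lt hx.2 hu.2⟩
      obtain ⟨ξ, hξ, hξeq⟩ := exists_hasDerivAt_eq_slope z
        (fun x => c * g x - f x - h x / z x ^ α) hvu
        (fun x hx => (hcont x (hsub hx)).continuousWithinAt)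
        (fun x hx => hz' x (hsub (Ioo_subset_Icc_self hx)))
      have hle : (z u - z v) / (u - v) ≤ M := by
        rw [← hξeq]; exact hderiv_le ξ (hsub (Ioo_subset_Icc_self hξ))
      have huv : 0 < u - v := sub_pos.mpr hvu
      calc z u - z v = (z u - z v) / (u - v) * (u - v) := by field_simp
        _ ≤ M * (u - v) := mul_le_mul_of_nonneg_right hle huv.le
    have h1 : Tendsto (fun v => z u - z v) (𝓝[>] (0:ℝ)) (𝓝 (z u - 0)) :=
      tendsto_const_nhds.sub hz0
    have hid : Tendsto (fun v : ℝ => v) (𝓝[>] (0:ℝ)) (𝓝 0) :=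
      tendsto_id.mono_left nhdsWithin_le_nhds
    have h2 : Tendsto (fun v => M * (u - v)) (𝓝[>] (0:ℝ)) (𝓝 (M * (u - 0))) :=
      tendsto_const_nhds.mul (tendsto_const_nhds.sub hid)
    have hev : ∀ᶠ v in 𝓝[>] (0:ℝ), z u - z v ≤ M * (u - v) := by
      filter_upwards [Ioo_mem_nhdsGT_of_mem (by exact ⟨le_refl 0, hu.1⟩ : (0:ℝ) ∈ Ico 0 u)]
        with v hv using key v hv
    have := le_of_tendsto_of_tendsto h1 h2 hev
    simpa using this
  -- From the limit, get ε such that h u / u^α > M * M^α on (0, ε]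
  have hC : ∀ᶠ u in 𝓝[>] (0:ℝ), M * M ^ α < h u / u ^ α :=
    hlim.eventually (eventually_gt_atTop _)
  obtain ⟨ε, hε0, hsub⟩ := mem_nhdsGT_iff_exists_Ioc_subset.mp hC
  have hε0' : (0:ℝ) < ε := hε0
  set u : ℝ := min ε 1 / 2 with hudef
  have humem : u ∈ Ioo (0:ℝ) 1 := by
    constructor
    · have : 0 < min ε 1 := lt_min hε0' one_pos
      positivity
    · have : min ε 1 ≤ 1 := min_le_right _ _
      linarith
  have huε : u ≤ ε := by
    have h1 : min ε 1 ≤ ε := min_le_left _ _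
    have h2 : 0 < min ε 1 := lt_min hε0' one_pos
    calc u ≤ min ε 1 := by rw [hudef]; linarith
      _ ≤ ε := h1
  -- pick v ∈ (0,u) with z v < z u
  have hzu : 0 < z u := hzpos u humem
  have hev2 : ∀ᶠ v in 𝓝[>] (0:ℝ), z v < z u := hz0.eventually_lt_const hzu
  obtain ⟨v, hv1, hv2⟩ := ((hev2.and
    (Ioo_mem_nhdsGT_of_mem (⟨le_refl 0, humem.1⟩ : (0:ℝ) ∈ Ico 0 u))).exists)
  -- MVT gives ξ ∈ (v,u) with positive derivative
  have hvu : v < u := hv2.2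
  have hsub2 : Icc v u ⊆ Ioo 0 1 := fun x hx =>
    ⟨lt_of_lt_of_le hv2.1 hx.1, lt_of_le_of_lt hx.2 humem.2⟩
  obtain ⟨ξ, hξ, hξeq⟩ := exists_hasDerivAt_eq_slope z
    (fun x => c * g x - f x - h x / z x ^ α) hvu
    (fun x hx => (hcont x (hsub2 hx)).continuousWithinAt)
    (fun x hx => hz' x (hsub2 (Ioo_subset_Icc_self hx)))
  have hξmem : ξ ∈ Ioo (0:ℝ) 1 := hsub2 (Ioo_subset_Icc_self hξ)
  have hslope : 0 < (z u - z v) / (u - v) :=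
    div_pos (sub_pos.mpr hv1) (sub_pos.mpr hvu)
  have hderivpos : 0 < c * g ξ - f ξ - h ξ / z ξ ^ α := by rw [hξeq]; exact hslope
  -- hence h ξ < M * z ξ ^ α ≤ M * (M ξ)^α
  have hzξ : 0 < z ξ := hzpos ξ hξmem
  have hzξα : 0 < z ξ ^ α := Real.rpow_pos_of_pos hzξ α
  have h1 : h ξ / z ξ ^ α < M := lt_of_lt_of_le (by linarith [hbound ξ hξmem]) le_rfl
  have h2 : h ξ < M * z ξ ^ α := (div_lt_iff₀ hzξα).mp h1
  have h3 : z ξ ^ α ≤ (M * ξ) ^ α :=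
    Real.rpow_le_rpow hzξ.le (hzle ξ hξmem) hα.le
  have h4 : (M * ξ) ^ α = M ^ α * ξ ^ α := Real.mul_rpow hMpos.le hξmem.1.le
  have hξα : 0 < ξ ^ α := Real.rpow_pos_of_pos hξmem.1 α
  have h5 : h ξ / ξ ^ α < M * M ^ α := by
    rw [div_lt_iff₀ hξα]
    calc h ξ < M * z ξ ^ α := h2
      _ ≤ M * (M ^ α * ξ ^ α) := by
          rw [← h4]; exact mul_le_mul_of_nonneg_left h3 hMpos.le
      _ = M * M ^ α * ξ ^ α := by ring
  have hξε : ξ ∈ Ioc (0:ℝ) ε := ⟨hξmem.1, le_trans hξ.2.le huε⟩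
  exact absurd (hsub hξε) (not_lt.mpr h5.le)
end

section
/- If c g(0) − f(0) < (α+1)·(h_{α,0}/α^α)^(1/(α+1)) with h_{α,0} := lim_{u→0⁺} h(u)/u^α finite, then problem (P) has no solution for this c. Equivalently, if g(0) > 0, no solution exists when c < f(0)/g(0) + ((α+1)/g(0))·(h_{α,0}/α^α)^(1/(α+1)). -/
open Set Filter Topology Real

/-! By the mean value theorem, `z(u)/u = ż(ξ)` for some `ξ ∈ (0, u)`. On an interval
`(0, δ)` where `c g − f ≤ a` and `h(u)/u^α ≥ b`, let `m` be the supremum of `z(u)/u`.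
Since `z(ξ) ≤ m ξ`, the equation gives `ż(ξ) ≤ a − b m^(−α)`, hence `m + b m^(−α) ≤ a`.
By weighted AM–GM the minimum of `m + b m^(−α)` over `m > 0` is `(α+1)(b/α^α)^(1/(α+1))`,
and letting `a ↓ c g(0) − f(0)`, `b ↑ h_{α,0}` contradicts the hypothesis on `c`. -/

theorem add_one_mul_rpow_le_add_mul_rpow_neg {α b t : ℝ} (hα : 0 < α) (hb : 0 ≤ b)
    (ht : 0 < t) :
    (α + 1) * (b / α ^ α) ^ (1 / (α + 1)) ≤ t + b * t ^ (-α) := by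
  have hα1 : 0 < α + 1 := by linarith
  -- weighted AM–GM at points `x`, `y` chosen so that `x^α y` does not depend on `t`
  set x := (α + 1) / α * t
  set y := (α + 1) * (b * t ^ (-α))
  have hxy : x ^ α * y = (α + 1) ^ (α + 1) * (b / α ^ α) := by
    have ht' : t ^ α * t ^ (-α) = 1 := by
      rw [rpow_neg ht.le, mul_inv_cancel₀ (rpow_pos_of_pos ht α).ne']
    rw [mul_rpow (by positivity) ht.le, div_rpow hα1.le hα.le, rpow_add_one hα1.ne']
    calc (α + 1) ^ α / α ^ α * t ^ α * ((α + 1) * (b * t ^ (-α)))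
        = (α + 1) ^ α * (α + 1) * (b / α ^ α) * (t ^ α * t ^ (-α)) := by ring
      _ = _ := by rw [ht', mul_one]
  have hgeom :
      x ^ (α / (α + 1)) * y ^ (1 / (α + 1)) = (α + 1) * (b / α ^ α) ^ (1 / (α + 1)) := by
    rw [div_eq_mul_one_div α, rpow_mul (by positivity),
      ← mul_rpow (by positivity) (by positivity), hxy, mul_rpow (by positivity) (by positivity),
      one_div, rpow_rpow_inv hα1.le hα1.ne']
  have hmean : α / (α + 1) * x + 1 / (α + 1) * y = t + b * t ^ (-α) := by
    simp only [x, y]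
    field_simp
  rw [← hgeom, ← hmean]
  exact geom_mean_le_arith_mean2_weighted (by positivity) (by positivity) (by positivity)
    (by positivity) (by field_simp)

theorem exists_hasDerivAt_eq_div_of_tendsto_nhdsGT_zero {f f' : ℝ → ℝ} {u : ℝ} (hu : 0 < u)
    (hff' : ∀ x ∈ Ioo 0 u, HasDerivAt f (f' x) x) (hf0 : Tendsto f (𝓝[>] 0) (𝓝 0))
    (hfu : ContinuousWithinAt f (Iio u) u) :
    ∃ ξ ∈ Ioo 0 u, f' ξ = f u / u := by
  obtain ⟨ξ, hξ, hslope⟩ := exists_ratio_hasDerivAt_eq_ratio_slope' f f' hu id 1 hff'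
    (fun x _ => hasDerivAt_id x) hf0 (continuousWithinAt_id (s := Ioi 0)) hfu
    (continuousWithinAt_id (s := Iio u))
  refine ⟨ξ, hξ, ?_⟩
  rw [eq_div_iff hu.ne']
  simpa [mul_comm] using hslope

theorem add_one_mul_rpow_le_of_hasDerivAt {α a b δ : ℝ} {z φ h : ℝ → ℝ} (hα : 0 < α)
    (hb : 0 ≤ b) (hδ : 0 < δ)
    (hz : ∀ u ∈ Ioo 0 δ, HasDerivAt z (φ u - h u / z u ^ α) u)
    (hzpos : ∀ u ∈ Ioo 0 δ, 0 < z u) (hz0 : Tendsto z (𝓝[>] 0) (𝓝 0))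
    (hφ : ∀ u ∈ Ioo 0 δ, φ u ≤ a) (hh : ∀ u ∈ Ioo 0 δ, b ≤ h u / u ^ α) :
    (α + 1) * (b / α ^ α) ^ (1 / (α + 1)) ≤ a := by
  set S : ℝ → ℝ := fun u => z u / u
  have hSpos : ∀ u ∈ Ioo 0 δ, 0 < S u := fun u hu => div_pos (hzpos u hu) hu.1
  have hslope : ∀ u ∈ Ioo 0 δ, ∃ ξ ∈ Ioo 0 u, φ ξ - h ξ / z ξ ^ α = S u := fun u hu =>
    exists_hasDerivAt_eq_div_of_tendsto_nhdsGT_zero hu.1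
      (fun x hx => hz x ⟨hx.1, hx.2.trans hu.2⟩) hz0
      (hz u hu).continuousAt.continuousWithinAt
  have hterm_ge : ∀ ξ ∈ Ioo 0 δ, b * S ξ ^ (-α) ≤ h ξ / z ξ ^ α := by
    intro ξ hξ
    have hsplit : h ξ / z ξ ^ α = h ξ / ξ ^ α * S ξ ^ (-α) := by
      have hξα := rpow_pos_of_pos hξ.1 α
      have hzα := rpow_pos_of_pos (hzpos ξ hξ) α
      rw [rpow_neg (hSpos ξ hξ).le, div_rpow (hzpos ξ hξ).le hξ.1.le]
      field_simp
    rw [hsplit]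
    exact mul_le_mul_of_nonneg_right (hh ξ hξ) (rpow_nonneg (hSpos ξ hξ).le _)
  have hSle : ∀ u ∈ Ioo 0 δ, S u ≤ a := by
    intro u hu
    obtain ⟨ξ, hξ, hSu⟩ := hslope u hu
    have hξδ : ξ ∈ Ioo 0 δ := ⟨hξ.1, hξ.2.trans hu.2⟩
    linarith [hφ ξ hξδ, hterm_ge ξ hξδ, mul_nonneg hb (rpow_nonneg (hSpos ξ hξδ).le (-α))]
  set m := sSup (S '' Ioo 0 δ)
  have hle_m : ∀ u ∈ Ioo 0 δ, S u ≤ m := fun u hu =>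
    le_csSup ⟨a, forall_mem_image.2 hSle⟩ (mem_image_of_mem S hu)
  have hm : 0 < m := by
    have hmid : δ / 2 ∈ Ioo 0 δ := ⟨by positivity, by linarith⟩
    exact (hSpos _ hmid).trans_le (hle_m _ hmid)
  have hm_le : m ≤ a - b * m ^ (-α) := by
    refine csSup_le ((nonempty_Ioo.2 hδ).image S) (forall_mem_image.2 fun u hu => ?_)
    obtain ⟨ξ, hξ, hSu⟩ := hslope u hu
    have hξδ : ξ ∈ Ioo 0 δ := ⟨hξ.1, hξ.2.trans hu.2⟩
    have hpow : m ^ (-α) ≤ S ξ ^ (-α) :=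
      rpow_le_rpow_of_nonpos (hSpos ξ hξδ) (hle_m ξ hξδ) (neg_nonpos.2 hα.le)
    linarith [hφ ξ hξδ, hterm_ge ξ hξδ, mul_le_mul_of_nonneg_left hpow hb]
  linarith [add_one_mul_rpow_le_add_mul_rpow_neg hα hb hm]

theorem stmt_8_general (α c : ℝ) (hα : 0 < α) (f g h : ℝ → ℝ)
    (hf : ContinuousOn f (Icc 0 1)) (hg : ContinuousOn g (Icc 0 1))
    (hhpos : ∀ u ∈ Ioo (0:ℝ) 1, 0 < h u)
    (l : ℝ) (hl : Tendsto (fun u => h u / u ^ α) (𝓝[>] (0:ℝ)) (𝓝 l))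
    (hc : c * g 0 - f 0 < (α + 1) * (l / α ^ α) ^ (1 / (α + 1))) :
    ¬ ∃ z : ℝ → ℝ,
      (∀ u ∈ Ioo (0:ℝ) 1, HasDerivAt z (c * g u - f u - h u / z u ^ α) u) ∧
      (∀ u ∈ Ioo (0:ℝ) 1, 0 < z u) ∧
      Tendsto z (𝓝[>] (0:ℝ)) (𝓝 0) ∧
      Tendsto z (𝓝[<] (1:ℝ)) (𝓝 0) := by
  rintro ⟨z, hz, hzpos, hz0, -⟩
  -- the `max` keeps the base of the real power nonnegative for every `b < l`
  set K : ℝ → ℝ := fun b => (α + 1) * (max b 0 / α ^ α) ^ (1 / (α + 1))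
  have hratio : ∀ u ∈ Ioo (0:ℝ) 1, 0 ≤ h u / u ^ α := fun u hu =>
    div_nonneg (hhpos u hu).le (rpow_nonneg hu.1.le α)
  have hl0 : 0 ≤ l := ge_of_tendsto hl (eventually_of_mem (Ioo_mem_nhdsGT one_pos) hratio)
  have hφ : ContinuousWithinAt (fun u => c * g u - f u) (Ioi 0) 0 :=
    (((hg 0 (left_mem_Icc.2 zero_le_one)).const_mul c).sub
      (hf 0 (left_mem_Icc.2 zero_le_one))).mono_of_mem_nhdsWithin (Icc_mem_nhdsGT one_pos)
  have hK_le : ∀ b < l, ∀ a > c * g 0 - f 0, K b ≤ a := by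
    intro b hb a ha
    obtain ⟨δ, hδ, hsub⟩ := mem_nhdsGT_iff_exists_Ioo_subset.1
      ((hφ.eventually (gt_mem_nhds ha)).and
        ((hl.eventually (lt_mem_nhds hb)).and (Ioo_mem_nhdsGT one_pos)))
    exact add_one_mul_rpow_le_of_hasDerivAt hα (le_max_right b 0) hδ
      (fun u hu => hz u (hsub hu).2.2) (fun u hu => hzpos u (hsub hu).2.2) hz0
      (fun u hu => (hsub hu).1.le)
      (fun u hu => max_le (hsub hu).2.1.le (hratio u (hsub hu).2.2))
  have hK : Continuous K := continuous_const.mul <| (continuous_rpow_const (by positivity)).comp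
    ((continuous_id.max continuous_const).div_const _)
  have hKl : K l ≤ c * g 0 - f 0 :=
    le_of_tendsto (hK.tendsto l |>.mono_left nhdsWithin_le_nhds : Tendsto K (𝓝[<] l) _)
      (eventually_nhdsWithin_of_forall fun b hb => le_of_forall_gt_imp_ge_of_dense (hK_le b hb))
  simp only [K, max_eq_left hl0] at hKl
  linarith

/-- If `c g(0) − f(0) < (α+1)(h_{α,0}/α^α)^{1/(α+1)}`, where
`h_{α,0} = lim_{u→0⁺} h(u)/u^α` is finite, then problem (P) has no solution for
this `c`. -/
theorem stmt_8 (α c : ℝ) (hα : 0 < α) (f g h : ℝ → ℝ)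
    (hf : ContinuousOn f (Icc 0 1)) (hg : ContinuousOn g (Icc 0 1))
    (hh : ContinuousOn h (Icc 0 1))
    (hh0 : h 0 = 0) (hh1 : h 1 = 0) (hhpos : ∀ u ∈ Ioo (0:ℝ) 1, 0 < h u)
    (hg0 : 0 < g 0)
    (l : ℝ) (hl : Tendsto (fun u => h u / u ^ α) (𝓝[>] (0:ℝ)) (𝓝 l))
    (hc : c * g 0 - f 0 < (α + 1) * (l / α ^ α) ^ (1 / (α + 1))) :
    ¬ ∃ z : ℝ → ℝ,
      (∀ u ∈ Ioo (0:ℝ) 1, HasDerivAt z (c * g u - f u - h u / z u ^ α) u) ∧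
      (∀ u ∈ Ioo (0:ℝ) 1, 0 < z u) ∧
      Tendsto z (𝓝[>] (0:ℝ)) (𝓝 0) ∧
      Tendsto z (𝓝[<] (1:ℝ)) (𝓝 0) :=
  stmt_8_general α c hα f g h hf hg hhpos l hl hc
end

section
/- Fix c₀ ∈ ℝ and α > 0. For every r ∈ (0, 1/2) there exists δ > 0 such that for every c with |c − c₀| < δ and every positive solution z of ż = c g(u) − f(u) − h(u)/z^α defined on all of (0,1), one has z(u) ≥ δ for every u ∈ [r, 1−r]. -/
open Set Filter Topology Real

/-!
While `z < δ`, the term `h / z ^ α ≥ m / δ ^ α` dominates the bounded part `c g - f ≤ K` of the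
right-hand side, so `z` decreases at least at rate `m / δ ^ α - K`. Since `δ < (m / δ ^ α - K) η`
for small `δ`, a solution lying below `δ` at a point of `[r, 1 - r]` would reach `0` within
distance `η = r / 2`, still inside `(0, 1)`.
-/

theorem exists_forall_mul_sub_le_of_continuousOn {s : Set ℝ} (hs : IsCompact s) {f g : ℝ → ℝ}
    (hf : ContinuousOn f s) (hg : ContinuousOn g s) (c₀ : ℝ) :
    ∃ K, ∀ c, |c - c₀| ≤ 1 → ∀ v ∈ s, c * g v - f v ≤ K := by
  have hcont : ContinuousOn (fun p : ℝ × ℝ => p.1 * g p.2 - f p.2)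
      (Metric.closedBall c₀ 1 ×ˢ s) :=
    (continuousOn_fst.mul (hg.comp continuousOn_snd fun _ hp => hp.2)).sub
      (hf.comp continuousOn_snd fun _ hp => hp.2)
  obtain ⟨K, hK⟩ := ((isCompact_closedBall c₀ 1).prod hs).bddAbove_image hcont
  exact ⟨K, fun c hc v hv => hK ⟨(c, v), ⟨by rwa [Metric.mem_closedBall, Real.dist_eq], hv⟩, rfl⟩⟩

theorem eventually_lt_mul_sub_div_rpow {α : ℝ} (hα : 0 < α) (K : ℝ) {m η : ℝ} (hm : 0 < m)
    (hη : 0 < η) : ∀ᶠ δ in 𝓝[>] 0, δ < (m / δ ^ α - K) * η := by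
  have hlim : Tendsto (fun δ : ℝ => (δ + K * η) * δ ^ α) (𝓝 0) (𝓝 0) := by
    have hcont : ContinuousAt (fun δ : ℝ => (δ + K * η) * δ ^ α) 0 :=
      (continuousAt_id.add continuousAt_const).mul
        (Real.continuousAt_rpow_const 0 α (Or.inr hα.le))
    simpa [Real.zero_rpow hα.ne'] using hcont.tendsto
  filter_upwards [nhdsWithin_le_nhds (hlim.eventually_lt_const (mul_pos hm hη)),
    self_mem_nhdsWithin] with δ hδ (hδ0 : 0 < δ)
  have hpow : 0 < δ ^ α := Real.rpow_pos_of_pos hδ0 α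
  rw [sub_mul, div_mul_eq_mul_div, lt_sub_iff_add_lt, lt_div_iff₀ hpow]
  linarith

theorem solution_le_sub_mul_of_lt {α c K m δ a b : ℝ} {f g h z : ℝ → ℝ} (hα : 0 < α)
    (hm : 0 < m) (hz : ∀ x ∈ Icc a b, HasDerivAt z (c * g x - f x - h x / z x ^ α) x)
    (hzpos : ∀ x ∈ Icc a b, 0 < z x) (hK : ∀ x ∈ Icc a b, c * g x - f x ≤ K)
    (hmh : ∀ x ∈ Icc a b, m ≤ h x) (hza : z a < δ) (hKδ : K ≤ m / δ ^ α) :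
    ∀ x ∈ Icc a b, z x ≤ z a - (m / δ ^ α - K) * (x - a) := by
  set s := m / δ ^ α - K
  have hs : 0 ≤ s := sub_nonneg.2 hKδ
  refine image_le_of_deriv_right_lt_deriv_boundary'
    (fun x hx => (hz x hx).continuousAt.continuousWithinAt)
    (fun x hx => (hz x (Ico_subset_Icc_self hx)).hasDerivWithinAt) (by simp) (by fun_prop)
    (fun x _ => ((hasDerivAt_id x).sub_const a |>.const_mul s |>.const_sub (z a)).hasDerivWithinAt)
    ?_
  intro x hx hzx
  have hx' := Ico_subset_Icc_self hx
  have hzxδ : z x < δ := by nlinarith [hx.1]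
  have hzx0 := hzpos x hx'
  have hpow : z x ^ α < δ ^ α := Real.rpow_lt_rpow hzx0.le hzxδ hα
  have hpow0 : 0 < z x ^ α := Real.rpow_pos_of_pos hzx0 α
  have hdom : m / δ ^ α < h x / z x ^ α :=
    (div_lt_div_of_pos_left hm hpow0 hpow).trans_le
      (div_le_div_of_nonneg_right (hmh x hx') hpow0.le)
  simp only [mul_one]
  linarith [hK x hx']

theorem stmt_12_general (α c₀ : ℝ) (hα : 0 < α) (f g h : ℝ → ℝ)
    (hf : ContinuousOn f (Icc 0 1)) (hg : ContinuousOn g (Icc 0 1))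
    (hh : ContinuousOn h (Icc 0 1))
    (hhpos : ∀ u ∈ Ioo (0:ℝ) 1, 0 < h u) :
    ∀ r ∈ Ioo (0:ℝ) (1/2), ∃ δ > 0, ∀ c : ℝ, |c - c₀| < δ →
      ∀ z : ℝ → ℝ,
        (∀ u ∈ Ioo (0:ℝ) 1, HasDerivAt z (c * g u - f u - h u / z u ^ α) u) →
        (∀ u ∈ Ioo (0:ℝ) 1, 0 < z u) →
        ∀ u ∈ Icc r (1 - r), δ ≤ z u := by
  rintro r ⟨hr0, hr⟩
  have hsub : Icc r (1 - r / 2) ⊆ Ioo 0 1 :=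
    fun x hx => ⟨by linarith [hx.1], by linarith [hx.2]⟩
  obtain ⟨K, hK⟩ := exists_forall_mul_sub_le_of_continuousOn isCompact_Icc hf hg c₀
  obtain ⟨m, hm0, hm⟩ := isCompact_Icc.exists_forall_le'
    (hh.mono (hsub.trans Ioo_subset_Icc_self)) fun x hx => hhpos x (hsub hx)
  obtain ⟨δ, hδ, hδ0, hδ1⟩ := ((eventually_lt_mul_sub_div_rpow hα K hm0 (half_pos hr0)).and
    (Ioc_mem_nhdsGT one_pos)).exists
  refine ⟨δ, hδ0, fun c hc z hz hzpos u hu => ?_⟩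
  by_contra! hzu
  have hI : Icc u (u + r / 2) ⊆ Icc r (1 - r / 2) :=
    fun x hx => ⟨by linarith [hu.1, hx.1], by linarith [hu.2, hx.2]⟩
  have hrate : K < m / δ ^ α := sub_pos.1 (pos_of_mul_pos_left (hδ0.trans hδ) (by positivity))
  have hend := solution_le_sub_mul_of_lt hα hm0 (fun x hx => hz x (hsub (hI hx)))
    (fun x hx => hzpos x (hsub (hI hx)))
    (fun x hx => hK c (hc.le.trans hδ1) x (Ioo_subset_Icc_self (hsub (hI hx))))
    (fun x hx => hm x (hI hx)) hzu hrate.le (u + r / 2) ⟨by linarith, le_rfl⟩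
  have hpos := hzpos (u + r / 2) (hsub (hI ⟨by linarith, le_rfl⟩))
  rw [add_sub_cancel_left] at hend
  linarith

/-- Uniform lower bound on compact subintervals: for every `r ∈ (0,1/2)` there is
`δ > 0` such that every positive solution on `(0,1)` of the equation with speed
`c`, `|c − c₀| < δ`, satisfies `z(u) ≥ δ` on `[r, 1−r]`. -/
theorem stmt_12 (α c₀ : ℝ) (hα : 0 < α) (f g h : ℝ → ℝ)
    (hf : ContinuousOn f (Icc 0 1)) (hg : ContinuousOn g (Icc 0 1))
    (hh : ContinuousOn h (Icc 0 1))
    (hh0 : h 0 = 0) (hh1 : h 1 = 0) (hhpos : ∀ u ∈ Ioo (0:ℝ) 1, 0 < h u) :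
    ∀ r ∈ Ioo (0:ℝ) (1/2), ∃ δ > 0, ∀ c : ℝ, |c - c₀| < δ →
      ∀ z : ℝ → ℝ,
        (∀ u ∈ Ioo (0:ℝ) 1, HasDerivAt z (c * g u - f u - h u / z u ^ α) u) →
        (∀ u ∈ Ioo (0:ℝ) 1, 0 < z u) →
        ∀ u ∈ Icc r (1 - r), δ ≤ z u :=
  stmt_12_general α c₀ hα f g h hf hg hh hhpos
end

section
/- Let (cₙ) be a decreasing sequence of reals converging to c₀, and let zₙ be a positive solution of żₙ = cₙ g(u) − f(u) − h(u)/zₙ^α on (0,1), such that zₙ(u) → z₀(u) pointwise on (0,1). Then z₀(u) > 0 for all u ∈ (0,1) and z₀ is a C¹ solution of ż₀ = c₀ g(u) − f(u) − h(u)/z₀^α on (0,1). -/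
open Set Filter Topology Real

/-!
If `zₙ < δ` somewhere, then wherever `zₙ` stays below `δ` the term `h / zₙ ^ α` dominates and
`żₙ < -1`, so the positive solution `zₙ` would have to vanish within distance `δ`. With `δ` chosen
from the minimum of `h` on a compact subinterval this gives a lower bound uniform in `n`, which
passes to `z₀`. On compacts the right-hand sides are then uniformly bounded, so the `zₙ` are
equi-Lipschitz (hence `z₀` is continuous) and dominated convergence passes the integral form
`zₙ u - zₙ v = ∫ᵥᵘ żₙ` to the limit; the fundamental theorem of calculus concludes.
-/

theorem LipschitzOnWith.of_tendsto {ι α β : Type*} [PseudoEMetricSpace α] [PseudoEMetricSpace β]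
    {l : Filter ι} [l.NeBot] {F : ι → α → β} {f : α → β} {K : NNReal} {s : Set α}
    (hF : ∀ i, LipschitzOnWith K (F i) s)
    (hf : ∀ x ∈ s, Tendsto (fun i => F i x) l (𝓝 (f x))) : LipschitzOnWith K f s := by
  simp only [lipschitzOnWith_iff_restrict] at hF ⊢
  exact (isClosed_setOfPred_lipschitzWith K).mem_of_tendsto
    (tendsto_pi_nhds.2 fun x => hf x x.2) (Eventually.of_forall hF)

section LocallyBoundedDerivatives

variable {E : Type*} [NormedAddCommGroup E] [NormedSpace ℝ E] {a b : ℝ}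
  {z z' : ℕ → ℝ → E} {z₀ z₀' : ℝ → E}

theorem continuousOn_of_tendsto_of_hasDerivAt
    (hz : ∀ n, ∀ x ∈ Ioo a b, HasDerivAt (z n) (z' n x) x)
    (hbound : ∀ p q, a < p → q < b → ∃ C, ∀ n, ∀ x ∈ Icc p q, ‖z' n x‖ ≤ C)
    (hlim : ∀ x ∈ Ioo a b, Tendsto (fun n => z n x) atTop (𝓝 (z₀ x))) :
    ContinuousOn z₀ (Ioo a b) := by
  intro x hx
  obtain ⟨p, hap, hpx⟩ := exists_between hx.1
  obtain ⟨q, hxq, hqb⟩ := exists_between hx.2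
  obtain ⟨C, hC⟩ := hbound p q hap hqb
  have hsub : Icc p q ⊆ Ioo a b := Icc_subset_Ioo hap hqb
  have hlip : LipschitzOnWith C.toNNReal z₀ (Icc p q) :=
    LipschitzOnWith.of_tendsto (l := atTop)
      (fun n => (convex_Icc p q).lipschitzOnWith_of_nnnorm_hasDerivWithin_le
        (fun y hy => (hz n y (hsub hy)).hasDerivWithinAt) fun y hy => by
          rw [← NNReal.coe_le_coe, coe_nnnorm]
          exact (hC n y hy).trans (le_coe_toNNReal C))
      fun y hy => hlim y (hsub hy)
  exact (hlip.continuousOn.continuousAt (Icc_mem_nhds hpx hxq)).continuousWithinAt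

variable [CompleteSpace E]

theorem integral_eq_sub_of_tendsto_of_hasDerivAt
    (hz : ∀ n, ∀ x ∈ Ioo a b, HasDerivAt (z n) (z' n x) x)
    (hz' : ∀ n, ContinuousOn (z' n) (Ioo a b))
    (hbound : ∀ p q, a < p → q < b → ∃ C, ∀ n, ∀ x ∈ Icc p q, ‖z' n x‖ ≤ C)
    (hlim : ∀ x ∈ Ioo a b, Tendsto (fun n => z n x) atTop (𝓝 (z₀ x)))
    (hlim' : ∀ x ∈ Ioo a b, Tendsto (fun n => z' n x) atTop (𝓝 (z₀' x)))
    {u v : ℝ} (hu : u ∈ Ioo a b) (hv : v ∈ Ioo a b) :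
    ∫ t in v..u, z₀' t = z₀ u - z₀ v := by
  have huv : uIcc v u ⊆ Ioo a b := ordConnected_Ioo.uIcc_subset hv hu
  obtain ⟨C, hC⟩ := hbound (min v u) (max v u) (lt_min hv.1 hu.1) (max_lt hv.2 hu.2)
  have hFTC : ∀ n, ∫ t in v..u, z' n t = z n u - z n v := fun n =>
    intervalIntegral.integral_eq_sub_of_hasDerivAt (fun x hx => hz n x (huv hx))
      ((hz' n).mono huv).intervalIntegrable
  refine tendsto_nhds_unique ?_ (((hlim u hu).sub (hlim v hv)).congr fun n => (hFTC n).symm)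
  exact intervalIntegral.tendsto_integral_filter_of_dominated_convergence (fun _ => C)
    (Eventually.of_forall fun n =>
      ((hz' n).mono (uIoc_subset_uIcc.trans huv)).aestronglyMeasurable measurableSet_uIoc)
    (Eventually.of_forall fun n => Eventually.of_forall fun x hx => hC n x (uIoc_subset_uIcc hx))
    intervalIntegrable_const
    (Eventually.of_forall fun x hx => hlim' x (huv (uIoc_subset_uIcc hx)))

theorem hasDerivAt_of_tendsto_of_hasDerivAt
    (hz : ∀ n, ∀ x ∈ Ioo a b, HasDerivAt (z n) (z' n x) x)
    (hz' : ∀ n, ContinuousOn (z' n) (Ioo a b))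
    (hbound : ∀ p q, a < p → q < b → ∃ C, ∀ n, ∀ x ∈ Icc p q, ‖z' n x‖ ≤ C)
    (hlim : ∀ x ∈ Ioo a b, Tendsto (fun n => z n x) atTop (𝓝 (z₀ x)))
    (hlim' : ∀ x ∈ Ioo a b, Tendsto (fun n => z' n x) atTop (𝓝 (z₀' x)))
    (hz₀' : ContinuousOn z₀' (Ioo a b)) {x : ℝ} (hx : x ∈ Ioo a b) :
    HasDerivAt z₀ (z₀' x) x := by
  have hprimitive : HasDerivAt (fun w => z₀ x + ∫ t in x..w, z₀' t) (z₀' x) x :=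
    (intervalIntegral.integral_hasDerivAt_right IntervalIntegrable.refl
      (hz₀'.stronglyMeasurableAtFilter isOpen_Ioo x hx)
      (hz₀'.continuousAt (isOpen_Ioo.mem_nhds hx))).const_add _
  refine hprimitive.congr_of_eventuallyEq ?_
  filter_upwards [isOpen_Ioo.mem_nhds hx] with w hw
  rw [integral_eq_sub_of_tendsto_of_hasDerivAt hz hz' hbound hlim hlim' hw hx, add_sub_cancel]

end LocallyBoundedDerivatives

theorem le_of_pos_of_hasDerivAt_lt_neg {z z' : ℝ → ℝ} {a b δ K : ℝ} (hab : a ≤ b) (hK : 0 ≤ K)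
    (hz : ∀ x ∈ Icc a b, HasDerivAt z (z' x) x) (hz' : ∀ x ∈ Ico a b, z x < δ → z' x < -K)
    (hδ : δ ≤ K * (b - a)) (hb : 0 < z b) : δ ≤ z a := by
  by_contra! ha
  have hbarrier : z b ≤ z a - K * (b - a) :=
    image_le_of_deriv_right_lt_deriv_boundary (B := fun x => z a - K * (x - a))
      (fun x hx => (hz x hx).continuousAt.continuousWithinAt)
      (fun x hx => (hz x (Ico_subset_Icc_self hx)).hasDerivWithinAt) (by simp)
      (fun x => by simpa using (((hasDerivAt_id x).sub_const a).const_mul K).const_sub (z a))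
      (fun x hx hzx => hz' x hx (by nlinarith [hx.1]))
      ⟨hab, le_rfl⟩
  linarith

theorem exists_uniform_lower_bound_of_hasDerivAt_sub_div_rpow {α M m L : ℝ} (hα : 0 < α)
    (hm : 0 < m) (hL : 0 < L) :
    ∃ δ > 0, ∀ (z F h : ℝ → ℝ) (a b : ℝ), L ≤ b - a →
      (∀ x ∈ Icc a b, HasDerivAt z (F x - h x / z x ^ α) x) → (∀ x ∈ Icc a b, 0 < z x) →
      (∀ x ∈ Icc a b, F x ≤ M) → (∀ x ∈ Icc a b, m ≤ h x) → δ ≤ z a := by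
  have hblowup : Tendsto (fun δ : ℝ => m * δ ^ (-α)) (𝓝[>] 0) atTop :=
    (tendsto_rpow_neg_nhdsGT_zero (neg_lt_zero.2 hα)).const_mul_atTop hm
  -- below `δ` a solution falls with slope `< -1`, so it would reach `0` within distance `δ < L`
  obtain ⟨δ, hδL, hδM, hδ⟩ := ((eventually_lt_nhds hL).filter_mono nhdsWithin_le_nhds |>.and
    ((hblowup.eventually_gt_atTop (M + 1)).and self_mem_nhdsWithin)).exists
  refine ⟨δ, hδ, fun z F h a b hLab hz hzpos hF hh => ?_⟩
  refine le_of_pos_of_hasDerivAt_lt_neg (K := 1) (by linarith) zero_le_one hz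
    (fun x hx hzx => ?_) (by linarith) (hzpos b ⟨by linarith, le_rfl⟩)
  have hxab : x ∈ Icc a b := Ico_subset_Icc_self hx
  have hzα : 0 < z x ^ α := rpow_pos_of_pos (hzpos x hxab) α
  have hdominant : m * δ ^ (-α) ≤ h x / z x ^ α := by
    rw [rpow_neg hδ.le, ← div_eq_mul_inv]
    exact div_le_div₀ (hm.le.trans (hh x hxab)) (hh x hxab) hzα
      (rpow_le_rpow (hzpos x hxab).le hzx.le hα.le)
  linarith [hF x hxab]

theorem exists_pos_forall_le_of_hasDerivAt_sub_div_rpow {α M a b : ℝ} {F : ℕ → ℝ → ℝ}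
    {h : ℝ → ℝ} {z : ℕ → ℝ → ℝ} (hα : 0 < α) (hh : ContinuousOn h (Ioo a b))
    (hhpos : ∀ x ∈ Ioo a b, 0 < h x) (hF : ∀ n, ∀ x ∈ Ioo a b, F n x ≤ M)
    (hz : ∀ n, ∀ x ∈ Ioo a b, HasDerivAt (z n) (F n x - h x / z n x ^ α) x)
    (hzpos : ∀ n, ∀ x ∈ Ioo a b, 0 < z n x) {p q : ℝ} (hp : a < p) (hq : q < b) :
    ∃ δ > 0, ∀ n, ∀ x ∈ Icc p q, δ ≤ z n x := by
  obtain ⟨r, hqr, hrb⟩ := exists_between hq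
  have hsub : Icc p r ⊆ Ioo a b := Icc_subset_Ioo hp hrb
  obtain ⟨m, hm, hmh⟩ :=
    isCompact_Icc.exists_forall_le' (hh.mono hsub) fun x hx => hhpos x (hsub hx)
  obtain ⟨δ, hδ, hδz⟩ :=
    exists_uniform_lower_bound_of_hasDerivAt_sub_div_rpow (M := M) hα hm (sub_pos.2 hqr)
  refine ⟨δ, hδ, fun n x hx => ?_⟩
  have hxr : Icc x r ⊆ Icc p r := Icc_subset_Icc_left hx.1
  exact hδz (z n) (F n) h x r (by linarith [hx.2]) (fun y hy => hz n y (hsub (hxr hy)))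
    (fun y hy => hzpos n y (hsub (hxr hy))) (fun y hy => hF n y (hsub (hxr hy)))
    fun y hy => hmh y (hxr hy)

theorem abs_sub_div_rpow_le {α F h w δ M H : ℝ} (hα : 0 ≤ α) (hF : |F| ≤ M) (hh : 0 ≤ h)
    (hhH : h ≤ H) (hδ : 0 < δ) (hδw : δ ≤ w) : |F - h / w ^ α| ≤ M + H / δ ^ α := by
  have hδα : 0 < δ ^ α := rpow_pos_of_pos hδ α
  have hquot : h / w ^ α ≤ H / δ ^ α :=
    div_le_div₀ (hh.trans hhH) hhH hδα (rpow_le_rpow hδ.le hδw hα)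
  calc |F - h / w ^ α| ≤ |F| + |h / w ^ α| := abs_sub _ _
    _ ≤ M + H / δ ^ α := by
      rw [abs_of_nonneg (div_nonneg hh (rpow_nonneg (hδ.le.trans hδw) α))]
      linarith

theorem ContinuousOn.sub_div_rpow {s : Set ℝ} {F h w : ℝ → ℝ} (α : ℝ) (hF : ContinuousOn F s)
    (hh : ContinuousOn h s) (hw : ContinuousOn w s) (hwpos : ∀ x ∈ s, 0 < w x) :
    ContinuousOn (fun x => F x - h x / w x ^ α) s :=
  hF.sub (hh.div (hw.rpow_const fun x hx => Or.inl (hwpos x hx).ne') fun x hx =>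
    (rpow_pos_of_pos (hwpos x hx) α).ne')

theorem exists_forall_abs_mul_sub_le {s : Set ℝ} {f g : ℝ → ℝ} {c : ℕ → ℝ} {c₀ : ℝ}
    (hs : IsCompact s) (hf : ContinuousOn f s) (hg : ContinuousOn g s)
    (hc : Tendsto c atTop (𝓝 c₀)) : ∃ M, ∀ n, ∀ x ∈ s, |c n * g x - f x| ≤ M := by
  obtain ⟨C, hC⟩ := isBounded_iff_forall_norm_le.1 (Metric.isBounded_range_of_tendsto c hc)
  obtain ⟨G, hG⟩ := hs.exists_bound_of_continuousOn hg
  obtain ⟨F, hF⟩ := hs.exists_bound_of_continuousOn hf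
  refine ⟨C * G + F, fun n x hx => ?_⟩
  calc |c n * g x - f x| ≤ |c n| * |g x| + |f x| := by rw [← abs_mul]; exact abs_sub _ _
    _ ≤ C * G + F := by
      gcongr
      · exact (abs_nonneg _).trans (hC _ ⟨0, rfl⟩)
      · exact hC _ ⟨n, rfl⟩
      · exact hG x hx
      · exact hF x hx

theorem stmt_13_general (α : ℝ) (hα : 0 < α) (f g h : ℝ → ℝ)
    (hf : ContinuousOn f (Icc 0 1)) (hg : ContinuousOn g (Icc 0 1))
    (hh : ContinuousOn h (Icc 0 1))
    (hhpos : ∀ u ∈ Ioo (0:ℝ) 1, 0 < h u)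
    (c : ℕ → ℝ) (c₀ : ℝ) (hclim : Tendsto c atTop (𝓝 c₀))
    (z : ℕ → ℝ → ℝ) (z₀ : ℝ → ℝ)
    (hz : ∀ n, ∀ u ∈ Ioo (0:ℝ) 1,
      HasDerivAt (z n) (c n * g u - f u - h u / z n u ^ α) u)
    (hzpos : ∀ n, ∀ u ∈ Ioo (0:ℝ) 1, 0 < z n u)
    (hconv : ∀ u ∈ Ioo (0:ℝ) 1, Tendsto (fun n => z n u) atTop (𝓝 (z₀ u))) :
    (∀ u ∈ Ioo (0:ℝ) 1, 0 < z₀ u) ∧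
    (∀ u ∈ Ioo (0:ℝ) 1, HasDerivAt z₀ (c₀ * g u - f u - h u / z₀ u ^ α) u) := by
  obtain ⟨M, hM⟩ := exists_forall_abs_mul_sub_le isCompact_Icc hf hg hclim
  obtain ⟨H, hH⟩ := isCompact_Icc.exists_bound_of_continuousOn hh
  have hlow : ∀ p q, 0 < p → q < 1 → ∃ δ > 0, ∀ n, ∀ x ∈ Icc p q, δ ≤ z n x := fun p q =>
    exists_pos_forall_le_of_hasDerivAt_sub_div_rpow hα (hh.mono Ioo_subset_Icc_self) hhpos
      (fun n x hx => (le_abs_self _).trans (hM n x (Ioo_subset_Icc_self hx))) hz hzpos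
  have hpos : ∀ u ∈ Ioo (0:ℝ) 1, 0 < z₀ u := fun u hu => by
    obtain ⟨δ, hδ, hδz⟩ := hlow u u hu.1 hu.2
    exact hδ.trans_le <| ge_of_tendsto' (hconv u hu) fun n => hδz n u ⟨le_rfl, le_rfl⟩
  have hbound : ∀ p q, 0 < p → q < 1 → ∃ C, ∀ n, ∀ x ∈ Icc p q,
      ‖c n * g x - f x - h x / z n x ^ α‖ ≤ C := fun p q hp hq => by
    obtain ⟨δ, hδ, hδz⟩ := hlow p q hp hq
    refine ⟨M + H / δ ^ α, fun n x hx => ?_⟩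
    have hx01 : x ∈ Ioo (0:ℝ) 1 := Icc_subset_Ioo hp hq hx
    exact abs_sub_div_rpow_le hα.le (hM n x (Ioo_subset_Icc_self hx01)) (hhpos x hx01).le
      ((le_abs_self _).trans (hH x (Ioo_subset_Icc_self hx01))) hδ (hδz n x hx)
  have hcont : ∀ c' w, ContinuousOn w (Ioo 0 1) → (∀ x ∈ Ioo (0:ℝ) 1, 0 < w x) →
      ContinuousOn (fun x => c' * g x - f x - h x / w x ^ α) (Ioo 0 1) := fun c' w hw hwpos =>
    ((continuousOn_const.mul hg).sub hf |>.mono Ioo_subset_Icc_self).sub_div_rpow α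
      (hh.mono Ioo_subset_Icc_self) hw hwpos
  refine ⟨hpos, fun u hu => hasDerivAt_of_tendsto_of_hasDerivAt hz
    (fun n => hcont (c n) (z n) (fun x hx => (hz n x hx).continuousAt.continuousWithinAt)
      (hzpos n)) hbound hconv (fun x hx => ?_)
    (hcont c₀ z₀ (continuousOn_of_tendsto_of_hasDerivAt hz hbound hconv) hpos) hu⟩
  exact ((hclim.mul_const (g x)).sub_const (f x)).sub (tendsto_const_nhds.div
    ((hconv x hx).rpow_const (Or.inl (hpos x hx).ne')) (rpow_pos_of_pos (hpos x hx) α).ne')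

/-- Stability under pointwise limits: if `cₙ ↓ c₀` and `zₙ` are positive
solutions on `(0,1)` for speed `cₙ` converging pointwise to `z₀`, then `z₀` is
positive and solves the equation for speed `c₀`. -/
theorem stmt_13 (α : ℝ) (hα : 0 < α) (f g h : ℝ → ℝ)
    (hf : ContinuousOn f (Icc 0 1)) (hg : ContinuousOn g (Icc 0 1))
    (hh : ContinuousOn h (Icc 0 1))
    (hh0 : h 0 = 0) (hh1 : h 1 = 0) (hhpos : ∀ u ∈ Ioo (0:ℝ) 1, 0 < h u)
    (c : ℕ → ℝ) (c₀ : ℝ) (hcmono : Antitone c) (hclim : Tendsto c atTop (𝓝 c₀))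
    (z : ℕ → ℝ → ℝ) (z₀ : ℝ → ℝ)
    (hz : ∀ n, ∀ u ∈ Ioo (0:ℝ) 1,
      HasDerivAt (z n) (c n * g u - f u - h u / z n u ^ α) u)
    (hzpos : ∀ n, ∀ u ∈ Ioo (0:ℝ) 1, 0 < z n u)
    (hconv : ∀ u ∈ Ioo (0:ℝ) 1, Tendsto (fun n => z n u) atTop (𝓝 (z₀ u))) :
    (∀ u ∈ Ioo (0:ℝ) 1, 0 < z₀ u) ∧
    (∀ u ∈ Ioo (0:ℝ) 1, HasDerivAt z₀ (c₀ * g u - f u - h u / z₀ u ^ α) u) :=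
  stmt_13_general α hα f g h hf hg hh hhpos c c₀ hclim z z₀ hz hzpos hconv
end
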